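/- arXiv:2101.09267 — 9 statements merged into one kernel-verified Lean document; each statement's English description precedes it below -/
import Mathlib

section
/- Let F ⊆ {0,1}^n be a finite set of binary vectors and h ∈ [0,1]^n. Then h ∈ conv(F) if and only if there exist sets S_1,…,S_n, each a finite union of half-open subintervals of U = [0,1), such that the Lebesgue measure of S_i equals h_i for all i, and for every t ∈ U the binary vector v(t) defined by v(t)_i = 1 if t ∈ S_i and 0 otherwise belongs to F. -/
open MeasureTheory Set

/-- `S` is a finite union of half-open intervals `[a, b)`. -/
def FinUnionIco (S : Set ℝ) : Prop :=
  ∃ (k : ℕ) (a b : Fin k → ℝ), S = ⋃ j, Set.Ico (a j) (b j)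

/-!
The vectors `h ≥ 0` that admit such sets `S i` form a convex set containing every binary `v ∈ F`
(take `S i = [0,1)` or `∅`): a representation of `a • h + b • h'` is obtained by squeezing the sets
for `h` affinely into `[0, a)` and those for `h'` into `[a, 1)`. Conversely, `h` is the average over
`[0,1)` of the vector `v(t)`, which takes its values in `F`, so `h` lies in the closed convex hull
of the finite set `F`.
-/

open scoped Pointwise

namespace FinUnionIco

theorem measurableSet {S : Set ℝ} (hS : FinUnionIco S) : MeasurableSet S := by
  obtain ⟨k, a, b, rfl⟩ := hS
  exact .iUnion fun j => measurableSet_Ico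

theorem empty : FinUnionIco ∅ :=
  ⟨0, Fin.elim0, Fin.elim0, by simp⟩

theorem Ico (a b : ℝ) : FinUnionIco (Ico a b) :=
  ⟨1, fun _ => a, fun _ => b, (iUnion_const _).symm⟩

theorem union {S T : Set ℝ} (hS : FinUnionIco S) (hT : FinUnionIco T) : FinUnionIco (S ∪ T) := by
  obtain ⟨k, a, b, rfl⟩ := hS
  obtain ⟨l, a', b', rfl⟩ := hT
  refine ⟨k + l, Fin.append a a', Fin.append b b', ?_⟩
  rw [← finSumFinEquiv.surjective.iUnion_comp, iUnion_sum]
  simp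

theorem image_affine {S : Set ℝ} (hS : FinUnionIco S) {a : ℝ} (ha : 0 < a) (c : ℝ) :
    FinUnionIco ((a * · + c) '' S) := by
  obtain ⟨k, l, r, rfl⟩ := hS
  exact ⟨k, fun j => a * l j + c, fun j => a * r j + c, by simp [image_iUnion, image_affine_Ico ha]⟩

end FinUnionIco

theorem volume_image_affine {a : ℝ} (ha : 0 < a) (c : ℝ) (S : Set ℝ) :
    volume ((a * · + c) '' S) = ENNReal.ofReal a * volume S := by
  have : (a * · + c) '' S = (· + c) '' (a • S) := by
    rw [← image_smul, image_image]; rfl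
  rw [this, image_add_right, measure_preimage_add_right, Measure.addHaar_smul_of_nonneg _ ha.le]
  simp

theorem image_affine_subset_Ico {S : Set ℝ} (hS : S ⊆ Ico 0 1) {a : ℝ} (ha : 0 < a) (c : ℝ) :
    (a * · + c) '' S ⊆ Ico c (a + c) :=
  (image_mono hS).trans_eq (by rw [image_affine_Ico ha]; simp)

theorem mem_image_affine_iff {S : Set ℝ} {a : ℝ} (ha : a ≠ 0) (c s : ℝ) :
    a * s + c ∈ (a * · + c) '' S ↔ s ∈ S :=
  ((add_left_injective c).comp (mul_right_injective₀ ha)).mem_set_image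

variable {ι : Type*}

noncomputable def indicatorVector (S : ι → Set ℝ) (t : ℝ) : ι → ℝ :=
  fun i => (S i).indicator (fun _ => 1) t

theorem indicatorVector_eq_of_forall_mem_iff {S T : ι → Set ℝ} {t s : ℝ}
    (h : ∀ i, t ∈ S i ↔ s ∈ T i) : indicatorVector S t = indicatorVector T s := by
  ext i
  classical
  exact if_congr (h i) rfl rfl

structure IsIcoRepresentation (F : Set (ι → ℝ)) (h : ι → ℝ) (S : ι → Set ℝ) : Prop where
  finUnionIco : ∀ i, FinUnionIco (S i)
  subset_Ico : ∀ i, S i ⊆ Ico 0 1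
  volume_eq : ∀ i, volume (S i) = ENNReal.ofReal (h i)
  indicatorVector_mem : ∀ t ∈ Ico (0 : ℝ) 1, indicatorVector S t ∈ F

namespace IsIcoRepresentation

variable {F : Set (ι → ℝ)}

theorem of_mem {v : ι → ℝ} (hv : v ∈ F) (hbin : ∀ i, v i = 0 ∨ v i = 1) :
    IsIcoRepresentation F v fun i => if v i = 1 then Ico 0 1 else ∅ where
  finUnionIco i := by
    split_ifs
    exacts [.Ico 0 1, .empty]
  subset_Ico i := by
    split_ifs
    exacts [subset_rfl, empty_subset _]
  volume_eq i := by
    rcases hbin i with hi | hi <;> simp [hi]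
  indicatorVector_mem t ht := by
    convert hv using 1
    ext i
    rcases hbin i with hi | hi <;> simp [indicatorVector, hi, ht]

theorem combination {h h' : ι → ℝ} {S T : ι → Set ℝ} (hS : IsIcoRepresentation F h S)
    (hT : IsIcoRepresentation F h' T) (h0 : 0 ≤ h) (h0' : 0 ≤ h') {a b : ℝ} (ha : 0 < a)
    (hb : 0 < b) (hab : a + b = 1) :
    IsIcoRepresentation F (a • h + b • h') fun i => (a * · + 0) '' S i ∪ (b * · + a) '' T i where
  finUnionIco i :=
    ((hS.finUnionIco i).image_affine ha 0).union ((hT.finUnionIco i).image_affine hb a)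
  subset_Ico i := by
    refine union_subset ((image_affine_subset_Ico (hS.subset_Ico i) ha 0).trans ?_)
      ((image_affine_subset_Ico (hT.subset_Ico i) hb a).trans ?_) <;>
    exact Ico_subset_Ico (by linarith) (by linarith)
  volume_eq i := by
    have hdisj : Disjoint ((a * · + 0) '' S i) ((b * · + a) '' T i) :=
      (Ico_disjoint_Ico_same.mono_left (image_affine_subset_Ico (hS.subset_Ico i) ha 0)).mono_right
        (by simpa using image_affine_subset_Ico (hT.subset_Ico i) hb a)
    rw [measure_union hdisj ((hT.finUnionIco i).image_affine hb a).measurableSet,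
      volume_image_affine ha, volume_image_affine hb, hS.volume_eq, hT.volume_eq,
      ← ENNReal.ofReal_mul ha.le, ← ENNReal.ofReal_mul hb.le,
      ← ENNReal.ofReal_add (mul_nonneg ha.le (h0 i)) (mul_nonneg hb.le (h0' i))]
    rfl
  indicatorVector_mem t ht := by
    rcases lt_or_ge t a with hta | hta
    · obtain ⟨s, hs, rfl⟩ : ∃ s ∈ Ico (0 : ℝ) 1, t = a * s + 0 :=
        ⟨t / a, ⟨div_nonneg ht.1 ha.le, (div_lt_one ha).2 hta⟩, by field_simp; ring⟩
      convert hS.indicatorVector_mem s hs using 1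
      refine indicatorVector_eq_of_forall_mem_iff fun i => ?_
      rw [mem_union, mem_image_affine_iff ha.ne', or_iff_left]
      exact fun hmem => (image_affine_subset_Ico (hT.subset_Ico i) hb a hmem).1.not_gt hta
    · obtain ⟨s, hs, rfl⟩ : ∃ s ∈ Ico (0 : ℝ) 1, t = b * s + a :=
        ⟨(t - a) / b, ⟨div_nonneg (by linarith) hb.le, (div_lt_one hb).2 (by linarith [ht.2])⟩,
          by field_simp; ring⟩
      convert hT.indicatorVector_mem s hs using 1
      refine indicatorVector_eq_of_forall_mem_iff fun i => ?_
      rw [mem_union, mem_image_affine_iff hb.ne', or_iff_right]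
      exact fun hmem =>
        (image_affine_subset_Ico (hS.subset_Ico i) ha 0 hmem).2.not_ge (by simpa using hta)

theorem mem_convexHull [Fintype ι] {h : ι → ℝ} {S : ι → Set ℝ}
    (hS : IsIcoRepresentation F h S) (hF : F.Finite) (h0 : 0 ≤ h) : h ∈ convexHull ℝ F := by
  have hint : ∀ i, IntegrableOn (fun t => indicatorVector S t i) (Ico 0 1) :=
    fun i => (integrableOn_const (by simp)).indicator (hS.finUnionIco i).measurableSet
  have hmean : ∫ t in Ico 0 1, indicatorVector S t = h := by
    ext i
    rw [eval_integral hint]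
    change ∫ t in Ico 0 1, (S i).indicator 1 t = h i
    rw [integral_indicator_one (hS.finUnionIco i).measurableSet,
      measureReal_restrict_apply (hS.finUnionIco i).measurableSet,
      inter_eq_left.2 (hS.subset_Ico i), measureReal_def, hS.volume_eq,
      ENNReal.toReal_ofReal (h0 i)]
  have hmem := (convex_convexHull ℝ F).set_average_mem (hF.isClosed_convexHull ℝ) (by simp)
    (by simp) (ae_restrict_of_forall_mem measurableSet_Ico fun t ht =>
      subset_convexHull ℝ F (hS.indicatorVector_mem t ht)) (Integrable.of_eval hint)
  rwa [setAverage_eq, Real.volume_real_Ico_of_le zero_le_one, sub_zero, inv_one, one_smul,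
    hmean] at hmem

end IsIcoRepresentation

theorem convex_setOf_isIcoRepresentation (F : Set (ι → ℝ)) :
    Convex ℝ {h : ι → ℝ | 0 ≤ h ∧ ∃ S, IsIcoRepresentation F h S} := by
  refine convex_iff_forall_pos.2 ?_
  rintro h ⟨h0, S, hS⟩ h' ⟨h0', T, hT⟩ a b ha hb hab
  exact ⟨by positivity, _, hS.combination hT h0 h0' ha hb hab⟩

theorem convexHull_subset_setOf_isIcoRepresentation {F : Set (ι → ℝ)}
    (hF : ∀ v ∈ F, ∀ i, v i = 0 ∨ v i = 1) :
    convexHull ℝ F ⊆ {h : ι → ℝ | 0 ≤ h ∧ ∃ S, IsIcoRepresentation F h S} := by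
  refine convexHull_min (fun v hv => ⟨fun i => ?_, _, .of_mem hv (hF v hv)⟩)
    (convex_setOf_isIcoRepresentation F)
  rcases hF v hv i with hi | hi <;> simp [hi]

theorem zuckerberg_convex_hull_characterization
    (n : ℕ) (F : Set (Fin n → ℝ)) (hFfin : F.Finite)
    (hFbin : ∀ v ∈ F, ∀ i, v i = 0 ∨ v i = 1)
    (h : Fin n → ℝ) (hh : ∀ i, h i ∈ Set.Icc (0 : ℝ) 1) :
    h ∈ convexHull ℝ F ↔
      ∃ S : Fin n → Set ℝ,
        (∀ i, FinUnionIco (S i)) ∧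
        (∀ i, S i ⊆ Set.Ico (0 : ℝ) 1) ∧
        (∀ i, volume (S i) = ENNReal.ofReal (h i)) ∧
        (∀ t ∈ Set.Ico (0 : ℝ) 1,
          (fun i => (S i).indicator (fun _ => (1 : ℝ)) t) ∈ F) := by
  constructor
  · intro hmem
    obtain ⟨-, S, hS⟩ := convexHull_subset_setOf_isIcoRepresentation hFbin hmem
    exact ⟨S, hS.1, hS.2, hS.3, hS.4⟩
  · rintro ⟨S, hunion, hsub, hvol, hmem⟩
    exact IsIcoRepresentation.mem_convexHull ⟨hunion, hsub, hvol, hmem⟩ hFfin fun i => (hh i).1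
end

section
/- Let G = (V,E) be an odd cycle (odd hole) with |V| odd. Then the polytope H = {x ∈ [0,1]^V : x_i + x_j ≤ 1 for all {i,j} ∈ E, ∑_{i∈V} x_i ≤ (|V|−1)/2} equals the convex hull of the incidence vectors of stable sets of G, i.e., conv{x ∈ {0,1}^V : x_i + x_j ≤ 1 for all {i,j} ∈ E}. -/
/-!
Circular rounding. On the circle `ℝ/ℤ` of length 1 place, for each vertex `i`, an open arc of
length `x i`, such that the arcs of adjacent vertices are disjoint. The vertices whose arcs contain
a uniformly random point of the circle form a stable set, and vertex `i` is covered with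
probability `x i`, so `x` is an average of stable-set vectors. Such arcs exist because the offsets
between consecutive centres only have to lie in `[(x i + x (i+1))/2, 1 - (x i + x (i+1))/2]` and
add up to an integer, and `∑ x ≤ (n - 1)/2` leaves room for that. Conversely, twice the size of a
stable set of the cycle is at most `n`, so for odd `n` it is at most `(n - 1)/2`.
-/

open Finset Metric MeasureTheory

theorem exists_le_le_sum_eq {ι : Type*} [Fintype ι] {a b : ι → ℝ} (hab : a ≤ b) {K : ℝ}
    (haK : ∑ i, a i ≤ K) (hKb : K ≤ ∑ i, b i) :
    ∃ δ : ι → ℝ, a ≤ δ ∧ δ ≤ b ∧ ∑ i, δ i = K := by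
  let f : ℝ → ℝ := fun t => ∑ i, (a i + t * (b i - a i))
  have hf : ContinuousOn f (Set.Icc 0 1) := by fun_prop
  obtain ⟨t, ⟨ht0, ht1⟩, hft⟩ :=
    intermediate_value_Icc zero_le_one hf ⟨by simpa [f] using haK, by simpa [f] using hKb⟩
  refine ⟨fun i => a i + t * (b i - a i), fun i => ?_, fun i => ?_, hft⟩
  · nlinarith [hab i]
  · nlinarith [hab i]

namespace ZMod

variable {n : ℕ} [NeZero n]

theorem sum_natCast_range {M : Type*} [AddCommMonoid M] (f : ZMod n → M) :
    ∑ j ∈ Finset.range n, f j = ∑ i, f i :=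
  Finset.sum_nbij' (fun j => (j : ZMod n)) val (by simp) (by simp [val_lt])
    (fun j hj => val_cast_of_lt (Finset.mem_range.1 hj)) (fun i _ => natCast_zmod_val i)
    (fun _ _ => rfl)

theorem sum_comp_add_one {M : Type*} [AddCommMonoid M] (f : ZMod n → M) :
    ∑ i, f (i + 1) = ∑ i, f i :=
  Fintype.sum_equiv (Equiv.addRight 1) _ _ fun _ => rfl

theorem exists_add_one_sub_eq_of_sum_eq_zero {G : Type*} [AddCommGroup G] {δ : ZMod n → G}
    (hδ : ∑ i, δ i = 0) : ∃ c : ZMod n → G, ∀ i, c (i + 1) - c i = δ i := by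
  let g : ℕ → G := fun k => ∑ j ∈ Finset.range k, δ j
  have hg : Function.Periodic g n := fun k => by
    simp only [g, Finset.sum_range_add, add_eq_left]
    simpa [sum_natCast_range (fun i : ZMod n => δ (k + i))] using
      (Equiv.sum_comp (Equiv.addLeft (k : ZMod n)) δ).trans hδ
  refine ⟨fun i => g i.val, fun i => ?_⟩
  show g (i + 1).val - g i.val = δ i
  rw [val_add, val_one_eq_one_mod, Nat.add_mod_mod, hg.map_mod_nat]
  simp [g, Finset.sum_range_succ]

end ZMod

namespace UnitAddCircle

theorem le_norm_coe {r x : ℝ} (hr : r ≤ x) (hx : x ≤ 1 - r) : r ≤ ‖(x : UnitAddCircle)‖ := by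
  rw [norm_eq]
  rcases le_or_gt (round x) 0 with h | h
  · have : (round x : ℝ) ≤ 0 := by exact_mod_cast h
    exact le_abs.2 (Or.inl (by linarith))
  · have : (1 : ℝ) ≤ round x := by exact_mod_cast h
    exact le_abs.2 (Or.inr (by linarith))

instance isProbabilityMeasure_volume : IsProbabilityMeasure (volume : Measure UnitAddCircle) :=
  ⟨by simp⟩

theorem integral_indicator_ball (c : UnitAddCircle) {r : ℝ} (h0 : 0 ≤ r) (h1 : r ≤ 1) :
    ∫ θ, (ball c (r / 2)).indicator 1 θ = r := by
  rw [integral_indicator_one measurableSet_ball, Measure.real,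
    ← measure_congr AddCircle.closedBall_ae_eq_ball, AddCircle.volume_closedBall,
    mul_div_cancel₀ _ two_ne_zero, min_eq_right h1, ENNReal.toReal_ofReal h0]

end UnitAddCircle

theorem mem_convexHull_of_forall_indicator_ball_mem {ι : Type*} [Fintype ι] {S : Set (ι → ℝ)}
    (hS : S.Finite) (c : ι → UnitAddCircle) {x : ι → ℝ} (hx : ∀ i, 0 ≤ x i ∧ x i ≤ 1)
    (hmem : ∀ θ, (fun i => (ball (c i) (x i / 2)).indicator 1 θ) ∈ S) :
    x ∈ convexHull ℝ S := by
  have hint : ∀ i,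
      Integrable (fun θ => (ball (c i) (x i / 2)).indicator (1 : UnitAddCircle → ℝ) θ) :=
    fun i => (integrable_const (1 : ℝ)).indicator measurableSet_ball
  have hx_eq : x = ∫ θ, (fun i => (ball (c i) (x i / 2)).indicator 1 θ) := by
    ext i
    rw [eval_integral hint, UnitAddCircle.integral_indicator_ball _ (hx i).1 (hx i).2]
  rw [hx_eq]
  exact (convex_convexHull ℝ S).integral_mem (hS.isClosed_convexHull (𝕜 := ℝ))
    (ae_of_all _ fun θ => subset_convexHull ℝ S (hmem θ)) (Integrable.of_eval hint)

def cycleRelaxation (n : ℕ) [NeZero n] : Set (ZMod n → ℝ) :=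
  {x | (∀ i, 0 ≤ x i ∧ x i ≤ 1) ∧ (∀ i : ZMod n, x i + x (i + 1) ≤ 1) ∧
    (∑ i : ZMod n, x i) ≤ ((n : ℝ) - 1) / 2}

def cycleStableVectors (n : ℕ) [NeZero n] : Set (ZMod n → ℝ) :=
  {x | (∀ i, x i = 0 ∨ x i = 1) ∧ (∀ i : ZMod n, x i + x (i + 1) ≤ 1)}

section Cycle

variable {n : ℕ} [NeZero n]

theorem two_mul_sum_le_of_forall_add_le_one {x : ZMod n → ℝ} (h : ∀ i, x i + x (i + 1) ≤ 1) :
    2 * ∑ i, x i ≤ n := by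
  calc 2 * ∑ i, x i = ∑ i, (x i + x (i + 1)) := by
        rw [sum_add_distrib, ZMod.sum_comp_add_one x, two_mul]
    _ ≤ ∑ _i : ZMod n, (1 : ℝ) := sum_le_sum fun i _ => h i
    _ = n := by simp

theorem cycleStableVectors_subset_cycleRelaxation (hodd : Odd n) :
    cycleStableVectors n ⊆ cycleRelaxation n := by
  rintro x ⟨hx01, hedge⟩
  refine ⟨fun i => by rcases hx01 i with h | h <;> simp [h], hedge, ?_⟩
  have hcard : ∑ i, x i = (#{i | x i = 1} : ℝ) := by
    rw [← sum_boole]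
    exact sum_congr rfl fun i _ => by rcases hx01 i with h | h <;> simp [h]
  have h2 := two_mul_sum_le_of_forall_add_le_one hedge
  rw [hcard] at h2 ⊢
  obtain ⟨l, rfl⟩ := hodd
  have hle : #{i | x i = 1} ≤ l := by
    have : 2 * #{i | x i = 1} ≤ 2 * l + 1 := by exact_mod_cast h2
    omega
  have : (#{i | x i = 1} : ℝ) ≤ l := by exact_mod_cast hle
  push_cast
  linarith

theorem convex_cycleRelaxation : Convex ℝ (cycleRelaxation n) := by
  rintro x ⟨hxb, hxe, hxs⟩ y ⟨hyb, hye, hys⟩ a b ha hb hab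
  simp only [cycleRelaxation, Set.mem_ofPred_eq, Pi.add_apply, Pi.smul_apply, smul_eq_mul]
  refine ⟨fun i => ⟨?_, ?_⟩, fun i => ?_, ?_⟩
  · nlinarith [hxb i, hyb i]
  · nlinarith [hxb i, hyb i]
  · nlinarith [hxe i, hye i]
  · rw [sum_add_distrib, ← mul_sum, ← mul_sum]
    calc a * ∑ i, x i + b * ∑ i, y i ≤ a * ((n - 1) / 2) + b * ((n - 1) / 2) :=
          add_le_add (mul_le_mul_of_nonneg_left hxs ha) (mul_le_mul_of_nonneg_left hys hb)
      _ = (n - 1) / 2 := by rw [← add_mul, hab, one_mul]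

theorem cycleStableVectors_finite : (cycleStableVectors n).Finite :=
  (Set.Finite.pi fun _ => (Set.toFinite {(0 : ℝ), 1})).subset
    fun x hx i _ => by rcases hx.1 i with h | h <;> simp [h]

theorem exists_disjoint_arcs {x : ZMod n → ℝ} (hedge : ∀ i, x i + x (i + 1) ≤ 1)
    (hsum : ∑ i, x i ≤ ((n : ℝ) - 1) / 2) :
    ∃ c : ZMod n → UnitAddCircle, ∀ i,
      Disjoint (ball (c i) (x i / 2)) (ball (c (i + 1)) (x (i + 1) / 2)) := by
  set a : ZMod n → ℝ := fun i => (x i + x (i + 1)) / 2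
  have hsum_a : ∑ i, a i = ∑ i, x i := by
    simp only [a, ← sum_div, sum_add_distrib, ZMod.sum_comp_add_one]
    ring
  have hsum_b : ∑ i, (1 - a i) = n - ∑ i, x i := by simp [sum_sub_distrib, hsum_a]
  -- `δ i` is the offset from centre `i` to centre `i + 1`; going once around the cycle the
  -- offsets must add up to an integer
  obtain ⟨δ, hδa, hδb, hδK⟩ := exists_le_le_sum_eq (a := a) (b := fun i => 1 - a i)
    (K := ⌈∑ i, x i⌉) (fun i => by simp only [a]; linarith [hedge i]) (hsum_a ▸ Int.le_ceil _)
    (by rw [hsum_b]; linarith [Int.ceil_lt_add_one (∑ i, x i)])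
  obtain ⟨c, hc⟩ := ZMod.exists_add_one_sub_eq_of_sum_eq_zero
    (δ := fun i => (δ i : UnitAddCircle)) (by
      rw [← QuotientAddGroup.mk_sum, hδK, AddCircle.coe_eq_zero_iff]
      exact ⟨⌈∑ i, x i⌉, by simp⟩)
  refine ⟨c, fun i => ball_disjoint_ball ?_⟩
  rw [dist_comm, dist_eq_norm, hc]
  have := UnitAddCircle.le_norm_coe (hδa i) (hδb i)
  simp only [a] at this
  linarith

theorem indicator_balls_mem_cycleStableVectors {c : ZMod n → UnitAddCircle} {r : ZMod n → ℝ}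
    (hdisj : ∀ i, Disjoint (ball (c i) (r i)) (ball (c (i + 1)) (r (i + 1))))
    (θ : UnitAddCircle) :
    (fun i => (ball (c i) (r i)).indicator 1 θ) ∈ cycleStableVectors n := by
  refine ⟨fun i => ?_, fun i => ?_⟩
  · by_cases h : θ ∈ ball (c i) (r i) <;> simp [h]
  · by_cases h : θ ∈ ball (c i) (r i)
    · simp [h, Set.disjoint_left.1 (hdisj i) h]
    · by_cases h' : θ ∈ ball (c (i + 1)) (r (i + 1)) <;> simp [h, h']

theorem cycleRelaxation_subset_convexHull :
    cycleRelaxation n ⊆ convexHull ℝ (cycleStableVectors n) := by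
  rintro x ⟨hbox, hedge, hsum⟩
  obtain ⟨c, hc⟩ := exists_disjoint_arcs hedge hsum
  exact mem_convexHull_of_forall_indicator_ball_mem cycleStableVectors_finite c hbox
    (indicator_balls_mem_cycleStableVectors hc)

end Cycle

theorem odd_cycle_stable_set_polytope_general
    (n : ℕ) [NeZero n] (hodd : Odd n) :
    {x : ZMod n → ℝ |
        (∀ i, 0 ≤ x i ∧ x i ≤ 1) ∧
        (∀ i : ZMod n, x i + x (i + 1) ≤ 1) ∧
        (∑ i : ZMod n, x i) ≤ ((n : ℝ) - 1) / 2} =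
      convexHull ℝ {x : ZMod n → ℝ |
        (∀ i, x i = 0 ∨ x i = 1) ∧
        (∀ i : ZMod n, x i + x (i + 1) ≤ 1)} :=
  cycleRelaxation_subset_convexHull.antisymm
    (convexHull_min (cycleStableVectors_subset_cycleRelaxation hodd) convex_cycleRelaxation)

theorem odd_cycle_stable_set_polytope
    (n : ℕ) [NeZero n] (hodd : Odd n) (hn : 5 ≤ n) :
    {x : ZMod n → ℝ |
        (∀ i, 0 ≤ x i ∧ x i ≤ 1) ∧
        (∀ i : ZMod n, x i + x (i + 1) ≤ 1) ∧
        (∑ i : ZMod n, x i) ≤ ((n : ℝ) - 1) / 2} =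
      convexHull ℝ {x : ZMod n → ℝ |
        (∀ i, x i = 0 ∨ x i = 1) ∧
        (∀ i : ZMod n, x i + x (i + 1) ≤ 1)} :=
  odd_cycle_stable_set_polytope_general n hodd
end

section
/- Let G = (V,E) be a bipartite graph. Then the polytope {x ∈ [0,1]^V : x_i + x_j ≤ 1 for all {i,j} ∈ E} equals the convex hull of the incidence vectors of stable sets of G, i.e., conv{x ∈ {0,1}^V : x_i + x_j ≤ 1 for all {i,j} ∈ E}. -/
/-!
Colour `G` with two colours and replace `x v` by `1 - x v` on the second colour class. This
affine involution maps the stable set polytope onto the order polytope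
`{z ∈ [0,1]^V | z u ≤ z v whenever u v is an edge with u in the first class}` and preserves
0/1-vectors, so it suffices to show that an order polytope is the convex hull of its 0/1-points.
For that, let `m` be the least value of `z` in `(0,1)`. Then
`z = m • [z > 0] + (1 - m) • (max (z - m) 0 / (1 - m))`; both summands are monotone
reparametrisations of `z`, hence lie in the order polytope, the first is a 0/1-point and the second
has fewer coordinates in `(0,1)` than `z`.
-/

open Set

variable {V : Type*}

def orderPolytope (R : V → V → Prop) : Set (V → ℝ) :=
  {z | (∀ v, z v ∈ Icc 0 1) ∧ ∀ u v, R u v → z u ≤ z v}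

namespace orderPolytope

variable {R : V → V → Prop}

theorem convex : Convex ℝ (orderPolytope R) := by
  intro x hx y hy a b ha hb hab
  exact ⟨fun v => convex_Icc 0 1 (hx.1 v) (hy.1 v) ha hb hab, fun u v huv =>
    add_le_add (smul_le_smul_of_nonneg_left (hx.2 u v huv) ha)
      (smul_le_smul_of_nonneg_left (hy.2 u v huv) hb)⟩

theorem comp_mem {g : ℝ → ℝ} (hg : Monotone g) (hg01 : MapsTo g (Icc 0 1) (Icc 0 1))
    {z : V → ℝ} (hz : z ∈ orderPolytope R) : g ∘ z ∈ orderPolytope R :=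
  ⟨fun v => hg01 (hz.1 v), fun u v huv => hg (hz.2 u v huv)⟩

end orderPolytope

section Peeling

theorem eq_zero_or_eq_one_of_mem_Icc_of_notMem_Ioo {s : ℝ} (hs : s ∈ Icc 0 1)
    (hs' : s ∉ Ioo 0 1) : s = 0 ∨ s = 1 := by
  have h : s ∈ Icc (0 : ℝ) 1 \ Ioo 0 1 := ⟨hs, hs'⟩
  rwa [Icc_sdiff_Ioo_same zero_le_one] at h

noncomputable def heaviside (s : ℝ) : ℝ := if 0 < s then 1 else 0

noncomputable def rescaleAbove (m s : ℝ) : ℝ := max (s - m) 0 / (1 - m)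

theorem monotone_heaviside : Monotone heaviside := by
  intro a b hab
  unfold heaviside
  split_ifs <;> linarith

theorem heaviside_eq_zero_or_eq_one (s : ℝ) : heaviside s = 0 ∨ heaviside s = 1 := by
  unfold heaviside
  split_ifs <;> simp

theorem mapsTo_heaviside : MapsTo heaviside (Icc 0 1) (Icc 0 1) := fun s _ => by
  rcases heaviside_eq_zero_or_eq_one s with h | h <;> simp [h]

variable {m : ℝ}

theorem monotone_rescaleAbove (hm : m < 1) : Monotone (rescaleAbove m) := fun _ _ hab =>
  div_le_div_of_nonneg_right (max_le_max (by linarith) le_rfl) (by linarith)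

theorem mapsTo_rescaleAbove (hm : m < 1) : MapsTo (rescaleAbove m) (Icc 0 1) (Icc 0 1) := by
  intro s hs
  have h1m : 0 < 1 - m := by linarith
  exact ⟨by unfold rescaleAbove; positivity,
    (div_le_one h1m).2 (max_le (by linarith [hs.2]) h1m.le)⟩

theorem lt_and_lt_one_of_rescaleAbove_mem_Ioo (hm : m < 1) {s : ℝ}
    (hs : rescaleAbove m s ∈ Ioo 0 1) : m < s ∧ s < 1 := by
  have h1m : 0 < 1 - m := by linarith
  obtain ⟨h0, h1⟩ := hs
  unfold rescaleAbove at h0 h1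
  rw [div_pos_iff_of_pos_right h1m, lt_max_iff] at h0
  rw [div_lt_one h1m, max_lt_iff] at h1
  constructor
  · rcases h0 with h0 | h0 <;> linarith
  · linarith [h1.1]

theorem mul_heaviside_add_mul_rescaleAbove (hm0 : 0 < m) (hm : m < 1) {s : ℝ}
    (hs : s = 0 ∨ m ≤ s) : m * heaviside s + (1 - m) * rescaleAbove m s = s := by
  have h1m : 1 - m ≠ 0 := by linarith
  unfold heaviside rescaleAbove
  rw [mul_div_cancel₀ _ h1m]
  rcases hs with rfl | hs
  · simp [hm0.le]
  · rw [if_pos (by linarith), max_eq_left (by linarith)]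
    ring

end Peeling

theorem orderPolytope_subset_convexHull [Finite V] (R : V → V → Prop) :
    orderPolytope R ⊆ convexHull ℝ (orderPolytope R ∩ {z | ∀ v, z v = 0 ∨ z v = 1}) := by
  intro z hz
  obtain ⟨n, hn⟩ : ∃ n, {v | z v ∈ Ioo 0 1}.ncard = n := ⟨_, rfl⟩
  induction n using Nat.strong_induction_on generalizing z with
  | _ n ih =>
  rcases {v | z v ∈ Ioo (0 : ℝ) 1}.eq_empty_or_nonempty with hF | hF
  · exact subset_convexHull ℝ _
      ⟨hz, fun v => eq_zero_or_eq_one_of_mem_Icc_of_notMem_Ioo (hz.1 v) (hF.subset ·)⟩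
  obtain ⟨w, hw, hmin⟩ := exists_min_image _ z (toFinite _) hF
  set m := z w
  have hgap (v : V) : z v = 0 ∨ m ≤ z v := by
    by_cases hv : z v ∈ Ioo 0 1
    · exact .inr (hmin v hv)
    · rcases eq_zero_or_eq_one_of_mem_Icc_of_notMem_Ioo (hz.1 v) hv with h | h
      exacts [.inl h, .inr (h ▸ hw.2.le)]
  have hstep : heaviside ∘ z ∈ convexHull ℝ (orderPolytope R ∩ {z | ∀ v, z v = 0 ∨ z v = 1}) :=
    subset_convexHull ℝ _ ⟨orderPolytope.comp_mem monotone_heaviside mapsTo_heaviside hz,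
      fun v => heaviside_eq_zero_or_eq_one _⟩
  have hrest :
      rescaleAbove m ∘ z ∈ convexHull ℝ (orderPolytope R ∩ {z | ∀ v, z v = 0 ∨ z v = 1}) := by
    refine ih _ ?_ (orderPolytope.comp_mem (monotone_rescaleAbove hw.2)
      (mapsTo_rescaleAbove hw.2) hz) rfl
    rw [← hn]
    refine ncard_lt_ncard ⟨fun v hv => ?_, fun h => ?_⟩
    · have := lt_and_lt_one_of_rescaleAbove_mem_Ioo hw.2 hv
      exact ⟨hw.1.trans this.1, this.2⟩
    · exact (lt_and_lt_one_of_rescaleAbove_mem_Ioo hw.2 (h hw)).1.false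
  convert convex_convexHull ℝ _ hstep hrest hw.1.le (sub_nonneg.2 hw.2.le) (add_sub_cancel m 1)
  ext v
  exact (mul_heaviside_add_mul_rescaleAbove hw.1 hw.2 (hgap v)).symm

theorem orderPolytope_eq_convexHull [Finite V] (R : V → V → Prop) :
    orderPolytope R = convexHull ℝ (orderPolytope R ∩ {z | ∀ v, z v = 0 ∨ z v = 1}) :=
  (orderPolytope_subset_convexHull R).antisymm
    (convexHull_min inter_subset_left orderPolytope.convex)

def flipOn (s : Set V) [DecidablePred (· ∈ s)] : (V → ℝ) →ᵃ[ℝ] (V → ℝ) where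
  toFun x v := if v ∈ s then 1 - x v else x v
  linear := LinearMap.pi fun v => if v ∈ s then -LinearMap.proj v else LinearMap.proj v
  map_vadd' x y := by
    ext v
    split_ifs <;> simp [*]
    ring

section FlipOn

variable (s : Set V) [DecidablePred (· ∈ s)]

theorem flipOn_apply (x : V → ℝ) (v : V) :
    flipOn s x v = if v ∈ s then 1 - x v else x v := rfl

theorem flipOn_involutive : Function.Involutive (flipOn s) := by
  intro x
  ext v
  simp only [flipOn_apply]
  split_ifs <;> ring

theorem flipOn_preimage_zero_or_one :
    flipOn s ⁻¹' {z | ∀ v, z v = 0 ∨ z v = 1} = {z | ∀ v, z v = 0 ∨ z v = 1} := by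
  ext x
  refine forall_congr' fun v => ?_
  rw [flipOn_apply]
  split_ifs
  · rw [sub_eq_zero, sub_eq_self, eq_comm, or_comm]
  · rfl

end FlipOn

def stableSetPolytope (G : SimpleGraph V) : Set (V → ℝ) :=
  {x | (∀ v, 0 ≤ x v ∧ x v ≤ 1) ∧ ∀ i j, G.Adj i j → x i + x j ≤ 1}

theorem stableSetPolytope_inter_zero_or_one (G : SimpleGraph V) :
    stableSetPolytope G ∩ {x | ∀ v, x v = 0 ∨ x v = 1} =
      {x | (∀ v, x v = 0 ∨ x v = 1) ∧ ∀ i j, G.Adj i j → x i + x j ≤ 1} := by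
  ext x
  refine ⟨fun ⟨⟨_, hE⟩, h01⟩ => ⟨h01, hE⟩, fun ⟨h01, hE⟩ => ⟨⟨fun v => ?_, hE⟩, h01⟩⟩
  rcases h01 v with h | h <;> simp [h]

theorem flipOn_preimage_orderPolytope {G : SimpleGraph V} (c : G.Coloring (Fin 2)) :
    flipOn {v | c v = 1} ⁻¹' orderPolytope (fun u v => G.Adj u v ∧ c u = 0) =
      stableSetPolytope G := by
  ext x
  have hbox (v : V) : flipOn {v | c v = 1} x v ∈ Icc 0 1 ↔ 0 ≤ x v ∧ x v ≤ 1 := by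
    rw [flipOn_apply, mem_Icc]
    split_ifs <;> constructor <;> rintro ⟨h0, h1⟩ <;> constructor <;> linarith
  have hedge {u v : V} (huv : G.Adj u v) (hu : c u = 0) :
      flipOn {v | c v = 1} x u ≤ flipOn {v | c v = 1} x v ↔ x u + x v ≤ 1 := by
    have hv : c v = 1 := Fin.eq_one_of_ne_zero _ (hu ▸ (c.valid huv).symm)
    simp only [flipOn_apply, mem_ofPred_eq, hu, hv, if_true, zero_ne_one, if_false]
    constructor <;> intro h <;> linarith
  refine and_congr (forall_congr' hbox) ⟨fun h i j hij => ?_, fun h u v huv => ?_⟩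
  · by_cases hi : c i = 0
    · exact (hedge hij hi).1 (h i j ⟨hij, hi⟩)
    · have hj : c j = 0 := by
        have := c.valid hij
        omega
      exact add_comm (x i) (x j) ▸ (hedge hij.symm hj).1 (h j i ⟨hij.symm, hj⟩)
  · exact (hedge huv.1 huv.2).2 (h u v huv.1)

theorem stableSetPolytope_eq_convexHull [Finite V] {G : SimpleGraph V}
    (c : G.Coloring (Fin 2)) :
    stableSetPolytope G = convexHull ℝ (stableSetPolytope G ∩ {x | ∀ v, x v = 0 ∨ x v = 1}) := by
  rw [← flipOn_preimage_orderPolytope c, ← flipOn_preimage_zero_or_one {v | c v = 1},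
    ← preimage_inter, ← (flipOn_involutive _).image_eq_preimage_symm,
    ← AffineMap.image_convexHull, ← orderPolytope_eq_convexHull]

theorem bipartite_stable_set_polytope
    (V : Type) [Fintype V] (G : SimpleGraph V) (hbip : G.Colorable 2) :
    {x : V → ℝ |
        (∀ v, 0 ≤ x v ∧ x v ≤ 1) ∧
        (∀ i j : V, G.Adj i j → x i + x j ≤ 1)} =
      convexHull ℝ {x : V → ℝ |
        (∀ v, x v = 0 ∨ x v = 1) ∧
        (∀ i j : V, G.Adj i j → x i + x j ≤ 1)} := by
  obtain ⟨c⟩ := hbip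
  rw [← stableSetPolytope_inter_zero_or_one]
  exact stableSetPolytope_eq_convexHull c
end

section
/- Let F, E ⊆ ℝ^n be finite nonempty sets of points and h ∈ ℝ^n. Then h ∈ conv(F) + cone(E) if and only if there exist sets S_1,…,S_n of finitely many non-overlapping weighted rectangles over U = [0,1) and sets S'_1,…,S'_n of finitely many non-overlapping weighted rectangles over ℝ_+ such that for each i the sum of signed areas of S_i and S'_i equals h_i, for every t ∈ U the vector of heights of rectangles of S_1,…,S_n active at t lies in conv(F), and for every t' ∈ ℝ_+ the vector of heights of rectangles of S'_1,…,S'_n active at t' lies in cone(E). -/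
open Set Pointwise

def RectFam (Q : Set ℝ) (R : Finset (ℝ × ℝ × ℝ)) : Prop :=
  (∀ r ∈ R, r.1 < r.2.1 ∧ r.2.2 ≠ 0 ∧ Set.Ico r.1 r.2.1 ⊆ Q) ∧
  ∀ r ∈ R, ∀ r' ∈ R, r ≠ r' →
    ∀ t ∈ Q, ¬(t ∈ Set.Ico r.1 r.2.1 ∧ t ∈ Set.Ico r'.1 r'.2.1)

def rectArea (R : Finset (ℝ × ℝ × ℝ)) : ℝ := ∑ r ∈ R, (r.2.1 - r.1) * r.2.2

noncomputable def rectHeight (R : Finset (ℝ × ℝ × ℝ)) (t : ℝ) : ℝ :=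
  ∑ r ∈ R, (Set.Ico r.1 r.2.1).indicator (fun _ => r.2.2) t

def coneOf {n : ℕ} (E : Set (Fin n → ℝ)) (hE : E.Finite) : Set (Fin n → ℝ) :=
  {x | ∃ c : (Fin n → ℝ) → ℝ, (∀ v, 0 ≤ c v) ∧ x = ∑ v ∈ hE.toFinset, c v • v}

/-!
A point `f + e` of `conv F + cone E` is realised by a single rectangle of height `f i`, resp.
`e i`, over `[0,1)` in each coordinate. Conversely, the height vectors form a step function
whose integral is the vector of areas. Over `[0,1)` this integral is the mean of a function with
values in the closed convex set `conv F`; over a bounded part `[0,b)` of `ℝ₊` carrying all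
rectangles it is a nonnegative combination of the finitely many values of the step function,
which lie in `cone E`, so no closedness of the cone is needed.
-/

open MeasureTheory

theorem coneOf_eq_hull {n : ℕ} (E : Set (Fin n → ℝ)) (hE : E.Finite) :
    coneOf E hE = PointedCone.hull ℝ E := by
  ext x
  constructor
  · rintro ⟨c, hc, rfl⟩
    exact Submodule.sum_mem _ fun v hv =>
      PointedCone.smul_mem _ (hc v) (PointedCone.subset_hull (hE.mem_toFinset.1 hv))
  · rw [SetLike.mem_coe, PointedCone.mem_hull_set]
    rintro ⟨c, hcE, hc, rfl⟩
    exact ⟨c, hc, Finsupp.sum_of_support_subset c (fun v hv => hE.mem_toFinset.2 (hcE hv)) _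
      fun _ _ => zero_smul ℝ _⟩

theorem MeasureTheory.SimpleFunc.integral_mem_pointedCone {α V : Type*} [MeasurableSpace α]
    [NormedAddCommGroup V] [NormedSpace ℝ V] {μ : Measure α} (C : PointedCone ℝ V)
    (f : SimpleFunc α V) (hf : ∀ᵐ a ∂μ, f a ∈ C) : f.integral μ ∈ C := by
  rw [SimpleFunc.integral_eq]
  refine Submodule.sum_mem _ fun y _ => ?_
  by_cases hy : y ∈ C
  · exact C.smul_mem measureReal_nonneg hy
  · have hnull : μ (f ⁻¹' {y}) = 0 :=
      measure_mono_null (fun a (ha : f a = y) => by simpa [ha] using hy) (ae_iff.1 hf)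
    simp [Measure.real, hnull]

theorem RectFam.fst_le_and_subset {Q : Set ℝ} {R : Finset (ℝ × ℝ × ℝ)}
    (hR : RectFam Q R) :
    ∀ r ∈ R, r.1 ≤ r.2.1 ∧ Ico r.1 r.2.1 ⊆ Q :=
  fun r hr => ⟨(hR.1 r hr).1.le, (hR.1 r hr).2.2⟩

noncomputable def unitRect (c : ℝ) : Finset (ℝ × ℝ × ℝ) :=
  if c = 0 then ∅ else {(0, 1, c)}

theorem rectFam_unitRect {Q : Set ℝ} (hQ : Ico 0 1 ⊆ Q) (c : ℝ) : RectFam Q (unitRect c) := by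
  by_cases hc : c = 0
  · simp [unitRect, hc, RectFam]
  · simp only [unitRect, hc, if_false, RectFam, Finset.mem_singleton]
    exact ⟨fun r hr => hr ▸ ⟨one_pos, hc, hQ⟩,
      fun r hr r' hr' hne => absurd (hr.trans hr'.symm) hne⟩

theorem rectArea_unitRect (c : ℝ) : rectArea (unitRect c) = c := by
  by_cases hc : c = 0 <;> simp [unitRect, rectArea, hc]

theorem rectHeight_unitRect {ι : Type*} (x : ι → ℝ) (t : ℝ) :
    (fun i => rectHeight (unitRect (x i)) t) = (Ico 0 1).indicator (fun _ => x) t := by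
  funext i
  by_cases ht : t ∈ Ico (0 : ℝ) 1 <;> by_cases hx : x i = 0 <;>
    simp [unitRect, rectHeight, ht, hx]

section StepFunction

noncomputable def rectHeightSimpleFunc (R : Finset (ℝ × ℝ × ℝ)) : SimpleFunc ℝ ℝ :=
  ∑ r ∈ R, (SimpleFunc.const ℝ r.2.2).restrict (Ico r.1 r.2.1)

theorem coe_rectHeightSimpleFunc (R : Finset (ℝ × ℝ × ℝ)) :
    ⇑(rectHeightSimpleFunc R) = rectHeight R := by
  induction R using Finset.induction_on with
  | empty => rfl
  | insert r R hr ih =>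
    ext t
    simp only [rectHeightSimpleFunc, rectHeight, Finset.sum_insert hr] at ih ⊢
    rw [SimpleFunc.add_apply, ih, SimpleFunc.restrict_apply _ measurableSet_Ico]
    rfl

variable {ι : Type*}

noncomputable def rectHeightsSimpleFunc [Finite ι] (S : ι → Finset (ℝ × ℝ × ℝ)) :
    SimpleFunc ℝ (ι → ℝ) where
  toFun t i := rectHeight (S i) t
  measurableSet_fiber' y := by
    refine measurable_pi_lambda _ (fun i => ?_) (measurableSet_singleton y)
    simpa [coe_rectHeightSimpleFunc] using (rectHeightSimpleFunc (S i)).measurable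
  finite_range' := by
    refine (Set.Finite.pi fun i => (rectHeightSimpleFunc (S i)).finite_range).subset ?_
    rintro _ ⟨t, rfl⟩ i -
    exact ⟨t, congrFun (coe_rectHeightSimpleFunc (S i)) t⟩

theorem integral_rectHeight {a b : ℝ} (R : Finset (ℝ × ℝ × ℝ))
    (hR : ∀ r ∈ R, r.1 ≤ r.2.1 ∧ Ico r.1 r.2.1 ⊆ Ico a b) :
    ∫ t in Ico a b, rectHeight R t = rectArea R := by
  unfold rectHeight rectArea
  rw [integral_finsetSum _ fun r _ => (integrable_const _).indicator measurableSet_Ico]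
  refine Finset.sum_congr rfl fun r hr => ?_
  rw [integral_indicator_const _ measurableSet_Ico,
    measureReal_restrict_apply measurableSet_Ico, inter_eq_left.2 (hR r hr).2,
    Real.volume_real_Ico_of_le (hR r hr).1, smul_eq_mul]

theorem integral_rectHeightsSimpleFunc [Fintype ι] {a b : ℝ}
    (S : ι → Finset (ℝ × ℝ × ℝ))
    (hS : ∀ i, ∀ r ∈ S i, r.1 ≤ r.2.1 ∧ Ico r.1 r.2.1 ⊆ Ico a b) :
    ∫ t in Ico a b, rectHeightsSimpleFunc S t = fun i => rectArea (S i) := by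
  funext i
  calc (∫ t in Ico a b, rectHeightsSimpleFunc S t) i
      = ∫ t in Ico a b, rectHeightsSimpleFunc S t i :=
        ((ContinuousLinearMap.proj (R := ℝ) (φ := fun _ : ι => ℝ) i).integral_comp_comm
          (SimpleFunc.integrable_of_isFiniteMeasure _)).symm
    _ = rectArea (S i) := integral_rectHeight (S i) (hS i)

end StepFunction

section Areas

variable {ι : Type*} [Fintype ι] {S : ι → Finset (ℝ × ℝ × ℝ)}

theorem exists_subset_Ico_of_rectFam_Ici {a : ℝ} (hS : ∀ i, RectFam (Ici a) (S i)) :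
    ∃ b, ∀ i, ∀ r ∈ S i, r.1 ≤ r.2.1 ∧ Ico r.1 r.2.1 ⊆ Ico a b := by
  obtain ⟨b, hb⟩ :=
    (Set.finite_iUnion fun i => ((S i).image fun r => r.2.1).finite_toSet).bddAbove
  refine ⟨b, fun i r hr => ?_⟩
  obtain ⟨hle, hsub⟩ := (hS i).fst_le_and_subset r hr
  have hb_r : r.2.1 ≤ b :=
    hb (mem_iUnion.2 ⟨i, Finset.mem_coe.2 (Finset.mem_image_of_mem _ hr)⟩)
  exact ⟨hle, fun t ht => ⟨hsub ht, ht.2.trans_le hb_r⟩⟩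

theorem rectAreas_mem_of_convex {s : Set (ι → ℝ)} (hs : Convex ℝ s) (hsc : IsClosed s)
    (hS : ∀ i, RectFam (Ico 0 1) (S i))
    (hmem : ∀ t ∈ Ico (0 : ℝ) 1, (fun i => rectHeight (S i) t) ∈ s) :
    (fun i => rectArea (S i)) ∈ s := by
  have : IsProbabilityMeasure (volume.restrict (Ico (0 : ℝ) 1)) := ⟨by simp⟩
  rw [← integral_rectHeightsSimpleFunc S fun i => (hS i).fst_le_and_subset]
  exact hs.integral_mem hsc (ae_restrict_of_forall_mem measurableSet_Ico hmem)
    (SimpleFunc.integrable_of_isFiniteMeasure _)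

theorem rectAreas_mem_pointedCone (C : PointedCone ℝ (ι → ℝ))
    (hS : ∀ i, RectFam (Ici 0) (S i))
    (hmem : ∀ t ∈ Ici (0 : ℝ), (fun i => rectHeight (S i) t) ∈ C) :
    (fun i => rectArea (S i)) ∈ C := by
  obtain ⟨b, hb⟩ := exists_subset_Ico_of_rectFam_Ici hS
  rw [← integral_rectHeightsSimpleFunc S hb,
    ← SimpleFunc.integral_eq_integral _ (SimpleFunc.integrable_of_isFiniteMeasure _)]
  exact SimpleFunc.integral_mem_pointedCone C _
    (ae_restrict_of_forall_mem measurableSet_Ico fun t ht => hmem t ht.1)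

end Areas

theorem zuckerberg_polyhedra_general
    (n : ℕ) (F E : Set (Fin n → ℝ)) (hFfin : F.Finite) (hEfin : E.Finite)
    (h : Fin n → ℝ) :
    h ∈ convexHull ℝ F + coneOf E hEfin ↔
      ∃ (S : Fin n → Finset (ℝ × ℝ × ℝ)) (S' : Fin n → Finset (ℝ × ℝ × ℝ)),
        (∀ i, RectFam (Set.Ico (0 : ℝ) 1) (S i)) ∧
        (∀ i, RectFam (Set.Ici (0 : ℝ)) (S' i)) ∧
        (∀ i, rectArea (S i) + rectArea (S' i) = h i) ∧
        (∀ t ∈ Set.Ico (0 : ℝ) 1,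
          (fun i => rectHeight (S i) t) ∈ convexHull ℝ F) ∧
        (∀ t' ∈ Set.Ici (0 : ℝ),
          (fun i => rectHeight (S' i) t') ∈ coneOf E hEfin) := by
  rw [coneOf_eq_hull]
  constructor
  · rintro ⟨f, hf, e, he, rfl⟩
    refine ⟨fun i => unitRect (f i), fun i => unitRect (e i),
      fun i => rectFam_unitRect subset_rfl _, fun i => rectFam_unitRect Ico_subset_Ici_self _,
      fun i => by simp [rectArea_unitRect], fun t ht => ?_, fun t _ => ?_⟩
    · rwa [rectHeight_unitRect, indicator_of_mem ht]
    · rw [rectHeight_unitRect, indicator_apply]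
      split_ifs
      exacts [he, zero_mem _]
  · rintro ⟨S, S', hS, hS', harea, hconv, hcone⟩
    refine ⟨_, ?_, _, rectAreas_mem_pointedCone _ hS' hcone, funext harea⟩
    exact rectAreas_mem_of_convex (convex_convexHull ℝ F) (hFfin.isClosed_convexHull ℝ) hS hconv

theorem zuckerberg_polyhedra
    (n : ℕ) (F E : Set (Fin n → ℝ)) (hFfin : F.Finite) (hEfin : E.Finite)
    (hFne : F.Nonempty) (hEne : E.Nonempty) (h : Fin n → ℝ) :
    h ∈ convexHull ℝ F + coneOf E hEfin ↔
      ∃ (S : Fin n → Finset (ℝ × ℝ × ℝ)) (S' : Fin n → Finset (ℝ × ℝ × ℝ)),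
        (∀ i, RectFam (Set.Ico (0 : ℝ) 1) (S i)) ∧
        (∀ i, RectFam (Set.Ici (0 : ℝ)) (S' i)) ∧
        (∀ i, rectArea (S i) + rectArea (S' i) = h i) ∧
        (∀ t ∈ Set.Ico (0 : ℝ) 1,
          (fun i => rectHeight (S i) t) ∈ convexHull ℝ F) ∧
        (∀ t' ∈ Set.Ici (0 : ℝ),
          (fun i => rectHeight (S' i) t') ∈ coneOf E hEfin) :=
  zuckerberg_polyhedra_general n F E hFfin hEfin h
end

section
/- Let G = (V,E) be a bipartite graph and b ∈ ℤ^E with b_{ij} ≥ 0 for all edges. Then the polyhedron H = {x ∈ ℝ_+^V : x_i + x_j ≤ b_{ij} for all {i,j} ∈ E} equals the convex hull of its nonnegative integral points {x ∈ ℕ^V : x_i + x_j ≤ b_{ij} for all {i,j} ∈ E}. -/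
/-!
Let `F` be the set of vertices where a point `x` of the polyhedron is fractional, and colour the
graph with two colours. Moving `x` by `+t` on the fractional vertices of one colour and by `-t` on
those of the other keeps every constraint `x i + x j ≤ b i j`: on an edge with both ends in `F`
the two moves cancel, and on an edge with `x j` integral, `b i j - x j` is an integer above
`x i`, hence at least `⌈x i⌉`. So `x` can slide in both directions until one more coordinate
becomes integral, and is a convex combination of the two endpoints; induction on `#F` finishes.
-/

open Finset Set

variable {V : Type*}

def edgePolyhedron (G : SimpleGraph V) (b : V → V → ℤ) : Set (V → ℝ) :=
  {x | (∀ v, 0 ≤ x v) ∧ ∀ i j, G.Adj i j → x i + x j ≤ (b i j : ℝ)}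

def integralPoints (G : SimpleGraph V) (b : V → V → ℤ) : Set (V → ℝ) :=
  {x | (∀ v, ∃ m : ℕ, x v = m) ∧ ∀ i j, G.Adj i j → x i + x j ≤ (b i j : ℝ)}

open Classical in
noncomputable def fracSupport [Fintype V] (x : V → ℝ) : Finset V :=
  {v | x v ∉ Set.range ((↑) : ℤ → ℝ)}

lemma mem_fracSupport [Fintype V] {x : V → ℝ} {v : V} :
    v ∈ fracSupport x ↔ x v ∉ Set.range ((↑) : ℤ → ℝ) := by
  simp [fracSupport]

lemma mem_segment_add_smul_add_smul_neg {E : Type*} [AddCommGroup E] [Module ℝ E] (x d : E)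
    {s t : ℝ} (hs : 0 ≤ s) (ht : 0 ≤ t) : x ∈ segment ℝ (x + s • d) (x + t • -d) := by
  rw [mem_segment_iff_sameRay, sub_add_cancel_left, add_sub_cancel_left, ← smul_neg]
  exact (SameRay.sameRay_nonneg_smul_left (-d) hs).nonneg_smul_right ht

lemma ceil_add_intCast_le {u : ℝ} {n k : ℤ} (h : u + n ≤ k) : (⌈u⌉ : ℝ) + n ≤ k := by
  have : ⌈u⌉ ≤ k - n := Int.ceil_le.mpr (by push_cast; linarith)
  have : (⌈u⌉ : ℝ) ≤ (k : ℝ) - n := by exact_mod_cast this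
  linarith

lemma eq_of_floor_le_of_le_ceil {r y : ℝ} (hr : r ∈ Set.range ((↑) : ℤ → ℝ))
    (hfl : ⌊r⌋ ≤ y) (hce : y ≤ ⌈r⌉) : y = r := by
  obtain ⟨n, rfl⟩ := hr
  simp only [Int.floor_intCast, Int.ceil_intCast] at hfl hce
  exact le_antisymm hce hfl

/-- The distance from `r` to the next integer upwards if `s = 1`, downwards otherwise. -/
noncomputable def intGap (r s : ℝ) : ℝ :=
  if s = 1 then ⌈r⌉ - r else r - ⌊r⌋

lemma intGap_pos {r : ℝ} (hr : r ∉ Set.range ((↑) : ℤ → ℝ)) (s : ℝ) : 0 < intGap r s := by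
  unfold intGap
  split_ifs
  · have : r ≠ ⌈r⌉ := fun h => hr ((Int.ceil_eq_self_iff_mem r).mp h.symm)
    linarith [(Int.le_ceil r).lt_of_ne this]
  · linarith [Int.floor_lt_self_iff.mpr hr]

lemma floor_le_add_mul_of_le_intGap {r s t : ℝ} (hs : s = 1 ∨ s = -1) (ht : 0 ≤ t)
    (hgap : t ≤ intGap r s) : ⌊r⌋ ≤ r + t * s ∧ r + t * s ≤ ⌈r⌉ := by
  rcases hs with rfl | rfl <;> simp only [intGap, if_true] at hgap ⊢
  · constructor <;> linarith [Int.floor_le r]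
  · rw [if_neg (by norm_num)] at hgap
    constructor <;> linarith [Int.le_ceil r]

lemma add_intGap_mul_mem_range {r s : ℝ} (hs : s = 1 ∨ s = -1) :
    r + intGap r s * s ∈ Set.range ((↑) : ℤ → ℝ) := by
  rcases hs with rfl | rfl
  · exact ⟨⌈r⌉, by simp [intGap]⟩
  · exact ⟨⌊r⌋, by rw [intGap, if_neg (by norm_num)]; ring⟩

section Polyhedron

variable {G : SimpleGraph V} {b : V → V → ℤ}

lemma convex_edgePolyhedron : Convex ℝ (edgePolyhedron G b) := by
  rintro x ⟨hx₀, hx⟩ y ⟨hy₀, hy⟩ p q hp hq hpq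
  refine ⟨fun v => ?_, fun i j hij => ?_⟩
  · simp only [Pi.add_apply, Pi.smul_apply, smul_eq_mul]
    have := hx₀ v; have := hy₀ v
    positivity
  · simp only [Pi.add_apply, Pi.smul_apply, smul_eq_mul]
    calc p * x i + q * y i + (p * x j + q * y j) = p * (x i + x j) + q * (y i + y j) := by ring
      _ ≤ p * b i j + q * b i j := by
        gcongr
        exacts [hx i j hij, hy i j hij]
      _ = b i j := by rw [← add_mul, hpq, one_mul]

lemma integralPoints_subset_edgePolyhedron : integralPoints G b ⊆ edgePolyhedron G b := by
  rintro x ⟨hnat, hx⟩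
  refine ⟨fun v => ?_, hx⟩
  obtain ⟨m, hm⟩ := hnat v
  exact hm ▸ m.cast_nonneg

lemma mem_integralPoints_of_forall_mem_range {x : V → ℝ} (hx : x ∈ edgePolyhedron G b)
    (hint : ∀ v, x v ∈ Set.range ((↑) : ℤ → ℝ)) : x ∈ integralPoints G b := by
  refine ⟨fun v => ?_, hx.2⟩
  obtain ⟨n, hn⟩ := hint v
  have : 0 ≤ n := by exact_mod_cast hn ▸ hx.1 v
  exact ⟨n.toNat, by rw [← hn]; exact_mod_cast (Int.toNat_of_nonneg this).symm⟩

lemma mem_edgePolyhedron_of_floor_le_of_le_ceil {x y : V → ℝ} (hx : x ∈ edgePolyhedron G b)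
    (hfl : ∀ v, ⌊x v⌋ ≤ y v) (hce : ∀ v, y v ≤ ⌈x v⌉)
    (hsum : ∀ i j, G.Adj i j → x i ∉ Set.range ((↑) : ℤ → ℝ) →
      x j ∉ Set.range ((↑) : ℤ → ℝ) → y i + y j = x i + x j) :
    y ∈ edgePolyhedron G b := by
  refine ⟨fun v => le_trans (by exact_mod_cast Int.floor_nonneg.mpr (hx.1 v)) (hfl v),
    fun i j hij => ?_⟩
  have hxij := hx.2 i j hij
  by_cases hj : x j ∈ Set.range ((↑) : ℤ → ℝ)
  · obtain ⟨n, hn⟩ := hj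
    rw [eq_of_floor_le_of_le_ceil ⟨n, hn⟩ (hfl j) (hce j), ← hn]
    rw [← hn] at hxij
    exact (add_le_add_left (hce i) _).trans (ceil_add_intCast_le hxij)
  by_cases hi : x i ∈ Set.range ((↑) : ℤ → ℝ)
  · obtain ⟨n, hn⟩ := hi
    rw [eq_of_floor_le_of_le_ceil ⟨n, hn⟩ (hfl i) (hce i), ← hn, add_comm]
    rw [← hn, add_comm] at hxij
    exact (add_le_add_left (hce j) _).trans (ceil_add_intCast_le hxij)
  rw [hsum i j hij hi hj]
  exact hxij

structure IsBalancedDirection (G : SimpleGraph V) (x d : V → ℝ) : Prop where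
  eq_zero : ∀ v, x v ∈ Set.range ((↑) : ℤ → ℝ) → d v = 0
  eq_one_or_neg_one : ∀ v, x v ∉ Set.range ((↑) : ℤ → ℝ) → d v = 1 ∨ d v = -1
  add_eq_zero : ∀ i j, G.Adj i j → x i ∉ Set.range ((↑) : ℤ → ℝ) →
    x j ∉ Set.range ((↑) : ℤ → ℝ) → d i + d j = 0

lemma IsBalancedDirection.neg {x d : V → ℝ} (hd : IsBalancedDirection G x d) :
    IsBalancedDirection G x (-d) where
  eq_zero v hv := by simp [hd.eq_zero v hv]
  eq_one_or_neg_one v hv := by rcases hd.eq_one_or_neg_one v hv with h | h <;> simp [h]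
  add_eq_zero i j hij hi hj := by
    simp only [Pi.neg_apply]
    linarith [hd.add_eq_zero i j hij hi hj]

open Classical in
noncomputable def SimpleGraph.Coloring.balancedDirection (c : G.Coloring (Fin 2))
    (x : V → ℝ) : V → ℝ :=
  fun v => if x v ∈ Set.range ((↑) : ℤ → ℝ) then 0 else if c v = 0 then 1 else -1

lemma SimpleGraph.Coloring.isBalancedDirection_balancedDirection (c : G.Coloring (Fin 2))
    (x : V → ℝ) : IsBalancedDirection G x (c.balancedDirection x) where
  eq_zero v hv := by simp [balancedDirection, hv]
  eq_one_or_neg_one v hv := by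
    simp only [balancedDirection, if_neg hv]
    split_ifs <;> simp
  add_eq_zero i j hij hi hj := by
    have hc := c.valid hij
    simp only [balancedDirection, if_neg hi, if_neg hj]
    generalize c i = p at hc
    generalize c j = q at hc
    fin_cases p <;> fin_cases q <;> simp_all

lemma exists_add_smul_mem_edgePolyhedron_card_fracSupport_lt [Fintype V] {x d : V → ℝ}
    (hx : x ∈ edgePolyhedron G b) (hd : IsBalancedDirection G x d)
    (hF : (fracSupport x).Nonempty) :
    ∃ t : ℝ, 0 < t ∧ x + t • d ∈ edgePolyhedron G b ∧
      #(fracSupport (x + t • d)) < #(fracSupport x) := by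
  classical
  set t := (fracSupport x).inf' hF fun v => intGap (x v) (d v)
  obtain ⟨v₀, hv₀, ht₀⟩ : ∃ v₀ ∈ fracSupport x, t = intGap (x v₀) (d v₀) :=
    exists_mem_eq_inf' hF _
  have ht_pos : 0 < t := (lt_inf'_iff hF).mpr fun v hv => intGap_pos (mem_fracSupport.mp hv) _
  have hbox : ∀ v, ⌊x v⌋ ≤ x v + t * d v ∧ x v + t * d v ≤ ⌈x v⌉ := by
    intro v
    by_cases hv : x v ∈ Set.range ((↑) : ℤ → ℝ)
    · simp [hd.eq_zero v hv, Int.floor_le, Int.le_ceil]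
    · exact floor_le_add_mul_of_le_intGap (hd.eq_one_or_neg_one v hv) ht_pos.le
        (inf'_le _ (mem_fracSupport.mpr hv))
  refine ⟨t, ht_pos, mem_edgePolyhedron_of_floor_le_of_le_ceil hx (fun v => (hbox v).1)
    (fun v => (hbox v).2) fun i j hij hi hj => ?_, ?_⟩
  · simp only [Pi.add_apply, Pi.smul_apply, smul_eq_mul]
    linear_combination t * hd.add_eq_zero i j hij hi hj
  · have hsub : fracSupport (x + t • d) ⊆ (fracSupport x).erase v₀ := by
      intro v hv
      simp only [mem_fracSupport, Pi.add_apply, Pi.smul_apply, smul_eq_mul] at hv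
      refine mem_erase.mpr ⟨?_, mem_fracSupport.mpr fun hxv => hv ?_⟩
      · rintro rfl
        rw [ht₀] at hv
        exact hv (add_intGap_mul_mem_range (hd.eq_one_or_neg_one v (mem_fracSupport.mp hv₀)))
      · rwa [hd.eq_zero v hxv, mul_zero, add_zero]
    exact (Finset.card_le_card hsub).trans_lt (card_erase_lt_of_mem hv₀)

lemma mem_convexHull_integralPoints [Fintype V] (c : G.Coloring (Fin 2)) {x : V → ℝ}
    (hx : x ∈ edgePolyhedron G b) : x ∈ convexHull ℝ (integralPoints G b) := by
  induction hn : #(fracSupport x) using Nat.strong_induction_on generalizing x with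
  | _ n ih =>
  obtain hF | hF := (fracSupport x).eq_empty_or_nonempty
  · refine subset_convexHull ℝ _ (mem_integralPoints_of_forall_mem_range hx fun v => ?_)
    by_contra hv
    simpa [hF] using mem_fracSupport.mpr hv
  · have hd := c.isBalancedDirection_balancedDirection x
    obtain ⟨s, hs, hys, hlts⟩ := exists_add_smul_mem_edgePolyhedron_card_fracSupport_lt hx hd hF
    obtain ⟨t, ht, hyt, hltt⟩ :=
      exists_add_smul_mem_edgePolyhedron_card_fracSupport_lt hx hd.neg hF
    exact (convex_convexHull ℝ _).segment_subset (ih _ (hn ▸ hlts) hys rfl)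
      (ih _ (hn ▸ hltt) hyt rfl) (mem_segment_add_smul_add_smul_neg x _ hs.le ht.le)

end Polyhedron

theorem bipartite_incidence_system_integer_hull_general
    (V : Type) [Fintype V] (G : SimpleGraph V) (hbip : G.Colorable 2)
    (b : V → V → ℤ) :
    {x : V → ℝ |
        (∀ v, 0 ≤ x v) ∧
        (∀ i j : V, G.Adj i j → x i + x j ≤ (b i j : ℝ))} =
      convexHull ℝ {x : V → ℝ |
        (∀ v, ∃ m : ℕ, x v = m) ∧
        (∀ i j : V, G.Adj i j → x i + x j ≤ (b i j : ℝ))} := by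
  obtain ⟨c⟩ := hbip
  exact Subset.antisymm (fun x hx => mem_convexHull_integralPoints c hx)
    (convexHull_min integralPoints_subset_edgePolyhedron convex_edgePolyhedron)

theorem bipartite_incidence_system_integer_hull
    (V : Type) [Fintype V] (G : SimpleGraph V) (hbip : G.Colorable 2)
    (b : V → V → ℤ) (hbsymm : ∀ i j, b i j = b j i)
    (hbnn : ∀ i j, G.Adj i j → 0 ≤ b i j) :
    {x : V → ℝ |
        (∀ v, 0 ≤ x v) ∧
        (∀ i j : V, G.Adj i j → x i + x j ≤ (b i j : ℝ))} =
      convexHull ℝ {x : V → ℝ |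
        (∀ v, ∃ m : ℕ, x v = m) ∧
        (∀ i j : V, G.Adj i j → x i + x j ≤ (b i j : ℝ))} :=
  bipartite_incidence_system_integer_hull_general V G hbip b
end

section
/- Every interval matrix is totally unimodular, where an interval matrix is a 0/1 matrix in which the 1-entries of each row are consecutive. -/
/-!
Subtracting from each column of a square interval matrix the column before it preserves the
determinant and turns each row, the indicator of an interval `[p, q]`, into a row with a single `1`
(at `p`) and a single `-1` (at `q + 1`, if that column exists). A square matrix whose rows have at
most one `1` and at most one `-1` has determinant in `{-1, 0, 1}`: either some row has at most one
nonzero entry and Laplace expansion along it reduces the size, or every row sums to zero. An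
arbitrary square submatrix reduces to the interval case by sorting its columns, which only changes
the sign of the determinant.
-/

/-- A real matrix is totally unimodular if every square submatrix
has determinant `-1`, `0` or `1`. -/
def TotallyUnimodular {m n : Type*} (A : Matrix m n ℝ) : Prop :=
  ∀ (k : ℕ) (f : Fin k → m) (g : Fin k → n),
    (A.submatrix f g).det = -1 ∨ (A.submatrix f g).det = 0 ∨ (A.submatrix f g).det = 1

/-- An interval matrix: a 0/1 matrix in which the 1-entries of each row
are consecutive. -/
def IsIntervalMatrix {m n : ℕ} (A : Matrix (Fin m) (Fin n) ℝ) : Prop :=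
  (∀ i j, A i j = 0 ∨ A i j = 1) ∧
  ∀ (i : Fin m) (j₁ j₂ j₃ : Fin n), j₁ ≤ j₂ → j₂ ≤ j₃ →
    A i j₁ = 1 → A i j₃ = 1 → A i j₂ = 1

open Matrix

lemma SignType.mul_mem_range_cast {R : Type*} [MulZeroOneClass R] [HasDistribNeg R] {a b : R}
    (ha : a ∈ Set.range (SignType.cast : SignType → R))
    (hb : b ∈ Set.range (SignType.cast : SignType → R)) :
    a * b ∈ Set.range (SignType.cast : SignType → R) := by
  obtain ⟨s, rfl⟩ := ha
  obtain ⟨t, rfl⟩ := hb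
  exact ⟨s * t, SignType.coe_mul s t⟩

lemma SignType.mem_range_cast_iff {R : Type*} [MulZeroOneClass R] [HasDistribNeg R] {x : R} :
    x ∈ Set.range (SignType.cast : SignType → R) ↔ x = -1 ∨ x = 0 ∨ x = 1 := by
  constructor
  · rintro ⟨s, rfl⟩
    cases s <;> simp
  · rintro (rfl | rfl | rfl)
    exacts [⟨-1, by simp⟩, ⟨0, by simp⟩, ⟨1, by simp⟩]

lemma SignType.intCast_units_mem_range_cast {R : Type*} [Ring R] (u : ℤˣ) :
    ((u : ℤ) : R) ∈ Set.range (SignType.cast : SignType → R) := by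
  rcases Int.units_eq_one_or u with rfl | rfl
  exacts [⟨1, by simp⟩, ⟨-1, by simp⟩]

section ZeroOne

variable {R : Type*} [Ring R] [CharZero R] {a b : R}

lemma eq_one_and_eq_zero_of_sub_eq_one (ha : a = 0 ∨ a = 1) (hb : b = 0 ∨ b = 1)
    (h : a - b = 1) : a = 1 ∧ b = 0 := by
  rcases ha with rfl | rfl <;> rcases hb with rfl | rfl <;> norm_num at h
  exact ⟨rfl, rfl⟩

lemma eq_zero_and_eq_one_of_sub_eq_neg_one (ha : a = 0 ∨ a = 1) (hb : b = 0 ∨ b = 1)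
    (h : a - b = -1) : a = 0 ∧ b = 1 := by
  rcases ha with rfl | rfl <;> rcases hb with rfl | rfl <;> norm_num at h
  exact ⟨rfl, rfl⟩

end ZeroOne

namespace Matrix

variable {R : Type*} [CommRing R]

section IncidenceRows

variable {m n m' n' : Type*}

/-- The transpose of the incidence matrix of a directed graph, where an edge may also have only
one end in the graph. -/
def HasIncidenceRows (N : Matrix m n R) : Prop :=
  (∀ i j, N i j ∈ Set.range (SignType.cast : SignType → R)) ∧
  (∀ i j j', N i j = 1 → N i j' = 1 → j = j') ∧
  (∀ i j j', N i j = -1 → N i j' = -1 → j = j')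

lemma HasIncidenceRows.submatrix {N : Matrix m n R} (hN : N.HasIncidenceRows) (f : m' → m)
    {g : n' → n} (hg : g.Injective) : (N.submatrix f g).HasIncidenceRows :=
  ⟨fun _ _ => hN.1 _ _, fun _ _ _ h h' => hg (hN.2.1 _ _ _ h h'),
    fun _ _ _ h h' => hg (hN.2.2 _ _ _ h h')⟩

lemma HasIncidenceRows.sum_row_eq_zero [Fintype n] {N : Matrix m n R} (hN : N.HasIncidenceRows)
    {i : m} {j j' : n} (hjj' : j ≠ j') (hj : N i j ≠ 0) (hj' : N i j' ≠ 0) :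
    ∑ l, N i l = 0 := by
  have h_plus_minus {p q : n} (hpq : p ≠ q) (hp : N i p = 1) (hq : N i q = -1) :
      ∑ l, N i l = 0 := by
    rw [Fintype.sum_eq_add p q hpq, hp, hq, add_neg_cancel]
    rintro l ⟨hlp, hlq⟩
    rcases SignType.mem_range_cast_iff.1 (hN.1 i l) with hl | hl | hl
    · exact absurd (hN.2.2 i l q hl hq) hlq
    · exact hl
    · exact absurd (hN.2.1 i l p hl hp) hlp
  have h_unit {l : n} (hl : N i l ≠ 0) : N i l = 1 ∨ N i l = -1 := by
    rcases SignType.mem_range_cast_iff.1 (hN.1 i l) with h | h | h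
    exacts [Or.inr h, absurd h hl, Or.inl h]
  rcases h_unit hj with hs | hs <;> rcases h_unit hj' with ht | ht
  · exact absurd (hN.2.1 i j j' hs ht) hjj'
  · exact h_plus_minus hjj' hs ht
  · exact h_plus_minus hjj'.symm ht hs
  · exact absurd (hN.2.2 i j j' hs ht) hjj'

theorem HasIncidenceRows.det_mem_range_signType :
    ∀ {k : ℕ} {N : Matrix (Fin k) (Fin k) R}, N.HasIncidenceRows →
      N.det ∈ Set.range (SignType.cast : SignType → R)
  | 0, N, _ => ⟨1, by simp⟩
  | k + 1, N, hN => by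
    by_cases hrow : ∃ i j₀, ∀ j ≠ j₀, N i j = 0
    · obtain ⟨i, j₀, hi⟩ := hrow
      rw [det_succ_row N i, Fintype.sum_eq_single j₀ fun j hj => by simp [hi j hj]]
      refine SignType.mul_mem_range_cast (SignType.mul_mem_range_cast
        ⟨(-1) ^ (i + j₀ : ℕ), by simp⟩ (hN.1 i j₀)) ?_
      exact det_mem_range_signType (hN.submatrix _ Fin.succAbove_right_injective)
    · push Not at hrow
      refine ⟨0, (det_eq_zero_of_mulVec_eq_zero_of_mem_nonZeroDivisors (v := 1) ?_
        (i := 0) (one_mem _)).symm⟩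
      ext i
      obtain ⟨j, -, hj⟩ := hrow i 0
      obtain ⟨j', hj'j, hj'⟩ := hrow i j
      simpa [mulVec, dotProduct] using hN.sum_row_eq_zero hj'j.symm hj hj'

end IncidenceRows

section ColBackDiff

variable {m : Type*} {n : ℕ}

def colBackDiff (A : Matrix m (Fin (n + 1)) R) : Matrix m (Fin (n + 1)) R :=
  of fun i => Fin.cases (A i 0) fun j => A i j.succ - A i j.castSucc

@[simp] lemma colBackDiff_zero (A : Matrix m (Fin (n + 1)) R) (i : m) :
    colBackDiff A i 0 = A i 0 := rfl

@[simp] lemma colBackDiff_succ (A : Matrix m (Fin (n + 1)) R) (i : m) (j : Fin n) :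
    colBackDiff A i j.succ = A i j.succ - A i j.castSucc := rfl

lemma det_colBackDiff (A : Matrix (Fin (n + 1)) (Fin (n + 1)) R) :
    (colBackDiff A).det = A.det :=
  (det_eq_of_forall_col_eq_smul_add_pred (A := A) (B := colBackDiff A) (fun _ => (1 : R))
    (fun _ => rfl) fun i j => by simp).symm

variable [CharZero R] {A : Matrix m (Fin (n + 1)) R}

lemma isLeast_of_colBackDiff_eq_one (h01 : ∀ i j, A i j = 0 ∨ A i j = 1)
    (hconn : ∀ i, {j | A i j = 1}.OrdConnected) {i : m} {j : Fin (n + 1)}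
    (hj : colBackDiff A i j = 1) : IsLeast {l | A i l = 1} j := by
  cases j using Fin.cases with
  | zero => exact ⟨by simpa using hj, fun l _ => Fin.zero_le l⟩
  | succ j =>
    have hsucc := eq_one_and_eq_zero_of_sub_eq_one (h01 i j.succ) (h01 i j.castSucc) hj
    refine ⟨hsucc.1, fun l hl => not_lt.1 fun hlt => ?_⟩
    have : A i j.castSucc = 1 :=
      (hconn i).out hl hsucc.1 ⟨Fin.le_castSucc_iff.2 hlt, Fin.castSucc_le_succ j⟩
    simp [hsucc.2] at this

lemma isLeast_of_colBackDiff_eq_neg_one (h01 : ∀ i j, A i j = 0 ∨ A i j = 1)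
    (hconn : ∀ i, {j | A i j = 1}.OrdConnected) {i : m} {j : Fin (n + 1)}
    (hj : colBackDiff A i j = -1) : IsLeast {l | A i l = 0 ∧ ∃ l' < l, A i l' = 1} j := by
  cases j using Fin.cases with
  | zero => rcases h01 i 0 with h | h <;> norm_num [h] at hj
  | succ j =>
    have hsucc := eq_zero_and_eq_one_of_sub_eq_neg_one (h01 i j.succ) (h01 i j.castSucc) hj
    refine ⟨⟨hsucc.1, j.castSucc, Fin.castSucc_lt_succ, hsucc.2⟩,
      fun l ⟨hl, l', hl'l, hl'⟩ => not_lt.1 fun hlt => ?_⟩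
    have : A i l = 1 := (hconn i).out hl' hsucc.2 ⟨hl'l.le, Fin.le_castSucc_iff.2 hlt⟩
    simp [hl] at this

lemma hasIncidenceRows_colBackDiff (h01 : ∀ i j, A i j = 0 ∨ A i j = 1)
    (hconn : ∀ i, {j | A i j = 1}.OrdConnected) : (colBackDiff A).HasIncidenceRows := by
  refine ⟨fun i j => SignType.mem_range_cast_iff.2 ?_, fun i j j' h h' => ?_,
    fun i j j' h h' => ?_⟩
  · cases j using Fin.cases with
    | zero => rcases h01 i 0 with h | h <;> simp [h]
    | succ j =>
      rcases h01 i j.succ with h | h <;> rcases h01 i j.castSucc with h' | h' <;> simp [h, h']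
  · exact (isLeast_of_colBackDiff_eq_one h01 hconn h).unique
      (isLeast_of_colBackDiff_eq_one h01 hconn h')
  · exact (isLeast_of_colBackDiff_eq_neg_one h01 hconn h).unique
      (isLeast_of_colBackDiff_eq_neg_one h01 hconn h')

end ColBackDiff

variable [CharZero R]

theorem det_mem_range_signType_of_interval {k : ℕ} (A : Matrix (Fin k) (Fin k) R)
    (h01 : ∀ i j, A i j = 0 ∨ A i j = 1) (hconn : ∀ i, {j | A i j = 1}.OrdConnected) :
    A.det ∈ Set.range (SignType.cast : SignType → R) := by
  cases k with
  | zero => exact ⟨1, by simp⟩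
  | succ k =>
    rw [← det_colBackDiff]
    exact (hasIncidenceRows_colBackDiff h01 hconn).det_mem_range_signType

theorem isTotallyUnimodular_of_interval {m n : Type*} [LinearOrder n] (A : Matrix m n R)
    (h01 : ∀ i j, A i j = 0 ∨ A i j = 1) (hconn : ∀ i, {j | A i j = 1}.OrdConnected) :
    A.IsTotallyUnimodular := by
  rw [isTotallyUnimodular_iff]
  intro k f g
  let σ : Equiv.Perm (Fin k) := Tuple.sort g
  have hsorted := det_mem_range_signType_of_interval (A.submatrix f (g ∘ σ))
    (fun _ _ => h01 _ _) fun i => (hconn (f i)).preimage_mono (Tuple.monotone_sort g)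
  have hunsort : A.submatrix f g = (A.submatrix f (g ∘ σ)).submatrix id ⇑σ⁻¹ := by
    ext i j
    simp
  rw [hunsort, det_permute']
  exact SignType.mul_mem_range_cast (SignType.intCast_units_mem_range_cast _) hsorted

end Matrix

theorem totallyUnimodular_of_isTotallyUnimodular {m n : Type*} {A : Matrix m n ℝ}
    (hA : A.IsTotallyUnimodular) : TotallyUnimodular A :=
  fun k f g => SignType.mem_range_cast_iff.1 ((isTotallyUnimodular_iff A).1 hA k f g)

theorem interval_matrix_totally_unimodular
    {m n : ℕ} (A : Matrix (Fin m) (Fin n) ℝ) (hA : IsIntervalMatrix A) :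
    TotallyUnimodular A :=
  totallyUnimodular_of_isTotallyUnimodular <| isTotallyUnimodular_of_interval A hA.1 fun i =>
    ⟨fun _ h₁ _ h₃ _ hj => hA.2 i _ _ _ hj.1 hj.2 h₁ h₃⟩
end

section
/- Let A ∈ {0,1}^{m×n} be an interval matrix and b ∈ ℤ^m with b ≥ 0. Then the polyhedron {x ∈ ℝ_+^n : Ax ≤ b} equals the convex hull of its nonnegative integral points {x ∈ ℕ^n : Ax ≤ b}. -/
/-!
For `x ≥ 0` with prefix sums `S k = x 0 + ⋯ + x (k - 1)` and a shift `t ∈ [0, 1)`, the vector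
`p t` with `p t j = ⌊S (j + 1) + t⌋ - ⌊S j + t⌋` is a nonnegative integer vector whose prefix
sums are `⌊S k + t⌋ - ⌊t⌋`. A row of an interval matrix sums a block `l ≤ j < r`, so it takes
the value `⌊S r + t⌋ - ⌊S l + t⌋` on `p t`, which is at most the integer `b i` whenever
`S r - S l ≤ b i`. Averaging over a uniform `t ∈ [0, 1)` recovers `x`, because
`∫₀¹ ⌊s + t⌋ dt = s`; as only finitely many values `S k` occur, the average can be taken over
finitely many shifts, which writes `x` as a convex combination of the integer points `p t`.
-/

open Finset

/-- `(T, w)` is a finite stand-in for Lebesgue measure on `[0, L)`: it gives every `[0, c)`,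
`c ∈ C`, its length. -/
theorem exists_weights_sum_filter_lt_eq (C : Finset ℝ) {L : ℝ} (hL : 0 ≤ L)
    (hC : ∀ c ∈ C, 0 ≤ c ∧ c < L) :
    ∃ (T : Finset ℝ) (w : ℝ → ℝ), (∀ t ∈ T, 0 ≤ t ∧ t < L) ∧ (∀ t ∈ T, 0 ≤ w t) ∧
      ∑ t ∈ T, w t = L ∧ ∀ c ∈ C, ∑ t ∈ T with t < c, w t = c := by
  induction C using Finset.induction_on_max generalizing L with
  | empty =>
    rcases hL.eq_or_lt with rfl | hL
    · exact ⟨∅, 0, by simp⟩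
    · exact ⟨{0}, fun _ => L, by simp [hL, hL.le]⟩
  | insert a C hlt ih =>
    obtain ⟨ha₀, haL⟩ := hC a (mem_insert_self a C)
    obtain ⟨T, w, hT, hw₀, hwT, hwC⟩ :=
      ih ha₀ fun c hc => ⟨(hC c (mem_insert_of_mem hc)).1, hlt c hc⟩
    have haT : a ∉ T := fun h => (hT a h).2.false
    have hsum : ∀ s ⊆ T, ∑ t ∈ s, Function.update w a (L - a) t = ∑ t ∈ s, w t :=
      fun s hs => Finset.sum_congr rfl fun t ht =>
        Function.update_of_ne (ne_of_mem_of_not_mem (hs ht) haT) _ _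
    refine ⟨insert a T, Function.update w a (L - a), ?_, ?_, ?_, ?_⟩
    · simp only [mem_insert, forall_eq_or_imp]
      exact ⟨⟨ha₀, haL⟩, fun t ht => ⟨(hT t ht).1, (hT t ht).2.trans haL⟩⟩
    · simp only [mem_insert, forall_eq_or_imp, Function.update_self, sub_nonneg]
      refine ⟨haL.le, fun t ht => ?_⟩
      rw [Function.update_of_ne (ne_of_mem_of_not_mem ht haT)]
      exact hw₀ t ht
    · rw [sum_insert haT, Function.update_self, hsum T subset_rfl, hwT, sub_add_cancel]
    · simp only [mem_insert, forall_eq_or_imp]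
      refine ⟨?_, fun c hc => ?_⟩
      · rw [filter_insert, if_neg (lt_irrefl a), filter_true_of_mem fun t ht => (hT t ht).2,
          hsum T subset_rfl, hwT]
      · rw [filter_insert, if_neg (hlt c hc).not_gt, hsum _ (filter_subset _ T), hwC c hc]

lemma floor_add_eq_ceil_sub_ite (u : ℝ) {t : ℝ} (ht₀ : 0 ≤ t) (ht₁ : t < 1) :
    (⌊u + t⌋ : ℝ) = ⌈u⌉ - if t < ⌈u⌉ - u then 1 else 0 := by
  have h₁ := Int.le_ceil u
  have h₂ := Int.ceil_lt_add_one u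
  split_ifs with h
  · rw [show (⌈u⌉ : ℝ) - 1 = ((⌈u⌉ - 1 : ℤ) : ℝ) by push_cast; ring, Int.cast_inj, Int.floor_eq_iff]
    push_cast
    constructor <;> linarith
  · rw [sub_zero, Int.cast_inj, Int.floor_eq_iff]
    constructor <;> linarith

theorem exists_weights_sum_floor_add_eq (s : Finset ℝ) :
    ∃ (T : Finset ℝ) (w : ℝ → ℝ), (∀ t ∈ T, 0 ≤ w t) ∧ ∑ t ∈ T, w t = 1 ∧
      ∀ u ∈ s, ∑ t ∈ T, w t * ⌊u + t⌋ = u := by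
  obtain ⟨T, w, hT, hw₀, hw₁, hwC⟩ := exists_weights_sum_filter_lt_eq
    (s.image fun u => ⌈u⌉ - u) zero_le_one (by
      simp only [mem_image, forall_exists_index, and_imp, forall_apply_eq_imp_iff₂]
      exact fun u _ => ⟨sub_nonneg.2 (Int.le_ceil u), by linarith [Int.ceil_lt_add_one u]⟩)
  refine ⟨T, w, hw₀, hw₁, fun u hu => ?_⟩
  calc ∑ t ∈ T, w t * ⌊u + t⌋
      = ∑ t ∈ T, (w t * ⌈u⌉ - if t < ⌈u⌉ - u then w t else 0) :=
        sum_congr rfl fun t ht => by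
          rw [floor_add_eq_ceil_sub_ite u (hT t ht).1 (hT t ht).2, mul_sub, mul_ite, mul_one,
            mul_zero]
    _ = (∑ t ∈ T, w t) * ⌈u⌉ - ∑ t ∈ T with t < ⌈u⌉ - u, w t := by
        rw [sum_sub_distrib, sum_mul, sum_filter]
    _ = u := by rw [hw₁, hwC _ (mem_image_of_mem _ hu)]; ring

section PrefixSum

variable {n : ℕ}

def prefixSum (x : Fin n → ℝ) (k : ℕ) : ℝ := ∑ j : Fin n with j.val < k, x j

lemma prefixSum_sub_prefixSum (x : Fin n → ℝ) {l r : ℕ} (h : l ≤ r) :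
    prefixSum x r - prefixSum x l =
      ∑ j : Fin n, if l ≤ (j : ℕ) ∧ (j : ℕ) < r then x j else 0 := by
  rw [prefixSum, prefixSum, sum_filter, sum_filter, ← sum_sub_distrib]
  refine sum_congr rfl fun j _ => ?_
  split_ifs <;> first | (exfalso; omega) | ring

lemma prefixSum_succ_sub (x : Fin n → ℝ) (j : Fin n) :
    prefixSum x (j + 1) - prefixSum x j = x j := by
  rw [prefixSum_sub_prefixSum x (Nat.le_succ j)]
  simp_rw [Nat.lt_add_one_iff, ← le_antisymm_iff, Fin.val_inj, sum_ite_eq, mem_univ, if_true]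

lemma prefixSum_sub_eq (Q : ℕ → ℝ) {k : ℕ} (hk : k ≤ n) :
    prefixSum (fun j : Fin n => Q (j + 1) - Q j) k = Q k - Q 0 := by
  induction k with
  | zero => simp [prefixSum]
  | succ k ih =>
    rw [← sub_add_cancel (prefixSum _ (k + 1)) (prefixSum _ k),
      prefixSum_succ_sub _ ⟨k, hk⟩, ih (by omega)]
    ring

end PrefixSum

lemma IsIntervalMatrix.exists_row_eq_indicator {m n : ℕ} {A : Matrix (Fin m) (Fin n) ℝ}
    (hA : IsIntervalMatrix A) (i : Fin m) :
    ∃ l r : ℕ, l ≤ r ∧ r ≤ n ∧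
      ∀ j : Fin n, A i j = if l ≤ (j : ℕ) ∧ (j : ℕ) < r then 1 else 0 := by
  set T : Finset (Fin n) := {j | A i j = 1}
  have hT : ∀ j, j ∈ T ↔ A i j = 1 := by simp [T]
  rcases T.eq_empty_or_nonempty with hT₀ | hT₀
  · refine ⟨0, 0, le_rfl, Nat.zero_le n, fun j => ?_⟩
    rw [if_neg (by omega)]
    exact (hA.1 i j).resolve_right fun h => by simpa [hT₀] using (hT j).2 h
  refine ⟨T.min' hT₀, T.max' hT₀ + 1, Nat.le_succ_of_le (T.min'_le_max' hT₀), (T.max' hT₀).isLt,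
    fun j => ?_⟩
  rcases hA.1 i j with h | h
  · rw [h, eq_comm, ite_eq_right_iff]
    intro hj
    have h₁ := hA.2 i _ j _ (Fin.le_def.2 hj.1) (Fin.le_def.2 (Nat.le_of_lt_succ hj.2))
      ((hT _).1 (T.min'_mem hT₀)) ((hT _).1 (T.max'_mem hT₀))
    simp [h] at h₁
  · have hj := (hT j).2 h
    rw [h, if_pos ⟨T.min'_le j hj, Nat.lt_succ_of_le (T.le_max' j hj)⟩]

lemma IsIntervalMatrix.exists_row_sum_eq_prefixSum_sub {m n : ℕ} {A : Matrix (Fin m) (Fin n) ℝ}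
    (hA : IsIntervalMatrix A) (i : Fin m) :
    ∃ l r : ℕ, l ≤ r ∧ r ≤ n ∧ ∀ x, ∑ j, A i j * x j = prefixSum x r - prefixSum x l := by
  obtain ⟨l, r, hlr, hr, hrow⟩ := hA.exists_row_eq_indicator i
  refine ⟨l, r, hlr, hr, fun x => ?_⟩
  rw [prefixSum_sub_prefixSum x hlr]
  simp only [hrow, ite_mul, one_mul, zero_mul]

lemma convex_setOf_nonneg_and_sum_mul_le {m n : ℕ} (A : Matrix (Fin m) (Fin n) ℝ) (b : Fin m → ℝ) :
    Convex ℝ {x : Fin n → ℝ | (∀ j, 0 ≤ x j) ∧ ∀ i, ∑ j, A i j * x j ≤ b i} := by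
  simp only [Set.ofPred_and, Set.ofPred_forall]
  exact (convex_iInter fun j => convex_halfSpace_ge (LinearMap.proj j).isLinear 0).inter
    (convex_iInter fun i =>
      convex_halfSpace_le ((LinearMap.proj i).comp A.mulVecLin).isLinear (b i))

lemma exists_natCast_eq_floor_sub_floor {u v : ℝ} (h : u ≤ v) :
    ∃ k : ℕ, (⌊v⌋ : ℝ) - ⌊u⌋ = k := by
  obtain ⟨k, hk⟩ := Int.eq_ofNat_of_zero_le (sub_nonneg.2 (Int.floor_mono h))
  exact ⟨k, by rw [← Int.cast_sub, hk]; rfl⟩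

lemma floor_add_sub_floor_add_le {u v t : ℝ} {z : ℤ} (h : v - u ≤ z) :
    (⌊v + t⌋ : ℝ) - ⌊u + t⌋ ≤ z := by
  have : ⌊v + t⌋ ≤ ⌊u + t⌋ + z := by
    rw [← Int.floor_add_intCast]
    exact Int.floor_mono (by linarith)
  rw [sub_le_iff_le_add']
  exact_mod_cast this

theorem IsIntervalMatrix.mem_convexHull_integerPoints {m n : ℕ} {A : Matrix (Fin m) (Fin n) ℝ}
    (hA : IsIntervalMatrix A) (b : Fin m → ℤ) {x : Fin n → ℝ} (hx₀ : ∀ j, 0 ≤ x j)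
    (hxb : ∀ i, ∑ j, A i j * x j ≤ b i) :
    x ∈ convexHull ℝ {y : Fin n → ℝ | (∀ j, ∃ k : ℕ, y j = k) ∧ ∀ i, ∑ j, A i j * y j ≤ b i} := by
  set I := {y : Fin n → ℝ | (∀ j, ∃ k : ℕ, y j = k) ∧ ∀ i, ∑ j, A i j * y j ≤ b i}
  set S := prefixSum x
  obtain ⟨T, w, hw₀, hw₁, hwS⟩ := exists_weights_sum_floor_add_eq ((range (n + 1)).image S)
  have hS : ∀ k ≤ n, S k ∈ (range (n + 1)).image S := fun k hk =>
    mem_image_of_mem S (mem_range.2 (Nat.lt_succ_of_le hk))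
  set p : ℝ → Fin n → ℝ := fun t j => (⌊S (j + 1) + t⌋ : ℝ) - ⌊S j + t⌋
  have hp : ∀ t, p t ∈ I := by
    refine fun t => ⟨fun j => exists_natCast_eq_floor_sub_floor ?_, fun i => ?_⟩
    · linarith [prefixSum_succ_sub x j, hx₀ j]
    obtain ⟨l, r, hlr, hr, hrow⟩ := hA.exists_row_sum_eq_prefixSum_sub i
    rw [hrow, prefixSum_sub_eq (fun k => (⌊S k + t⌋ : ℝ)) hr,
      prefixSum_sub_eq (fun k => (⌊S k + t⌋ : ℝ)) (hlr.trans hr), sub_sub_sub_cancel_right]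
    exact floor_add_sub_floor_add_le (by rw [← hrow]; exact hxb i)
  have hx : x = ∑ t ∈ T, w t • p t := by
    ext j
    simp only [p, Finset.sum_apply, Pi.smul_apply, smul_eq_mul, mul_sub, sum_sub_distrib,
      hwS _ (hS _ j.isLt), hwS _ (hS _ j.isLt.le)]
    exact (prefixSum_succ_sub x j).symm
  rw [hx]
  exact (convex_convexHull ℝ _).sum_mem hw₀ hw₁ fun t _ => subset_convexHull ℝ _ (hp t)

theorem interval_matrix_system_integer_hull_general
    {m n : ℕ} (A : Matrix (Fin m) (Fin n) ℝ) (hA : IsIntervalMatrix A)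
    (b : Fin m → ℤ) :
    {x : Fin n → ℝ |
        (∀ j, 0 ≤ x j) ∧ ∀ i, (∑ j, A i j * x j) ≤ (b i : ℝ)} =
      convexHull ℝ {x : Fin n → ℝ |
        (∀ j, ∃ k : ℕ, x j = k) ∧ ∀ i, (∑ j, A i j * x j) ≤ (b i : ℝ)} := by
  refine Set.Subset.antisymm (fun x hx => hA.mem_convexHull_integerPoints b hx.1 hx.2) ?_
  refine convexHull_min (fun x hx => ⟨fun j => ?_, hx.2⟩) (convex_setOf_nonneg_and_sum_mul_le A _)
  obtain ⟨k, hk⟩ := hx.1 j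
  exact hk ▸ k.cast_nonneg

theorem interval_matrix_system_integer_hull
    {m n : ℕ} (A : Matrix (Fin m) (Fin n) ℝ) (hA : IsIntervalMatrix A)
    (b : Fin m → ℤ) (hb : ∀ i, 0 ≤ b i) :
    {x : Fin n → ℝ |
        (∀ j, 0 ≤ x j) ∧ ∀ i, (∑ j, A i j * x j) ≤ (b i : ℝ)} =
      convexHull ℝ {x : Fin n → ℝ |
        (∀ j, ∃ k : ℕ, x j = k) ∧ ∀ i, (∑ j, A i j * x j) ≤ (b i : ℝ)} :=
  interval_matrix_system_integer_hull_general A hA b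
end

section
/- Let u₁, u₂ > 0 and f(x₁,x₂) = x₁x₂ on the box [0,u₁] × [0,u₂]. Then the convex hull of the graph {(x₁,x₂,x₁x₂) : x ∈ {0,u₁} × {0,u₂}} (equivalently, of the four corner points of the box with their products) equals the McCormick polytope P = {(x₁,x₂,z) ∈ ℝ³ : z ≤ u₂x₁, z ≤ u₁x₂, z ≥ 0, z ≥ u₂x₁ + u₁x₂ − u₁u₂}. -/
/-!
Both sides are convex and the corners satisfy the four McCormick inequalities, so the hull lies in
the polytope. Conversely, for `p = (x, y, z)` in the polytope, the slacks
`u₁u₂ - u₂x - u₁y + z`, `u₂x - z`, `u₁y - z`, `z` of the four inequalities, divided by `u₁u₂`,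
are nonnegative, sum to `1`, and are barycentric coordinates of `p` with respect to the corners
`(0,0,0)`, `(u₁,0,0)`, `(0,u₂,0)`, `(u₁,u₂,u₁u₂)`.
-/

theorem Convex.add_smul_four_mem {R E : Type*} [Field R] [LinearOrder R] [IsStrictOrderedRing R]
    [AddCommGroup E] [Module R E] {s : Set E} (hs : Convex R s) {a b c d : E}
    (ha : a ∈ s) (hb : b ∈ s) (hc : c ∈ s) (hd : d ∈ s) {wa wb wc wd : R}
    (hwa : 0 ≤ wa) (hwb : 0 ≤ wb) (hwc : 0 ≤ wc) (hwd : 0 ≤ wd) (hw : wa + wb + wc + wd = 1) :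
    wa • a + wb • b + wc • c + wd • d ∈ s := by
  have := hs.sum_mem (t := Finset.univ) (w := ![wa, wb, wc, wd]) (z := ![a, b, c, d])
    (by simp [Fin.forall_fin_succ, *]) (by simpa [Fin.sum_univ_four] using hw)
    (by simp [Fin.forall_fin_succ, *])
  simpa [Fin.sum_univ_four] using this

def mcCormickPolytope (u₁ u₂ : ℝ) : Set (ℝ × ℝ × ℝ) :=
  {p | p.2.2 ≤ u₂ * p.1 ∧ p.2.2 ≤ u₁ * p.2.1 ∧ 0 ≤ p.2.2 ∧
    u₂ * p.1 + u₁ * p.2.1 - u₁ * u₂ ≤ p.2.2}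

theorem convex_mcCormickPolytope (u₁ u₂ : ℝ) : Convex ℝ (mcCormickPolytope u₁ u₂) := by
  rintro ⟨x, y, z⟩ ⟨hp₁, hp₂, hp₃, hp₄⟩ ⟨x', y', z'⟩ ⟨hq₁, hq₂, hq₃, hq₄⟩ a b ha hb hab
  simp only [mcCormickPolytope, Set.mem_ofPred_eq, Prod.smul_mk, Prod.mk_add_mk, smul_eq_mul] at *
  refine ⟨?_, ?_, ?_, ?_⟩ <;> nlinarith

theorem corners_subset_mcCormickPolytope {u₁ u₂ : ℝ} (hu : 0 ≤ u₁ * u₂) :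
    ({(0, 0, 0), (u₁, 0, 0), (0, u₂, 0), (u₁, u₂, u₁ * u₂)} : Set (ℝ × ℝ × ℝ)) ⊆
      mcCormickPolytope u₁ u₂ := by
  rintro p (rfl | rfl | rfl | rfl) <;>
    simp only [mcCormickPolytope, Set.mem_ofPred_eq] <;> refine ⟨?_, ?_, ?_, ?_⟩ <;> linarith

theorem mcCormickPolytope_subset_convexHull_corners {u₁ u₂ : ℝ} (hu : 0 < u₁ * u₂) :
    mcCormickPolytope u₁ u₂ ⊆
      convexHull ℝ {(0, 0, 0), (u₁, 0, 0), (0, u₂, 0), (u₁, u₂, u₁ * u₂)} := by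
  rintro ⟨x, y, z⟩ ⟨h₁, h₂, h₃, h₄⟩
  have hu₁ : u₁ ≠ 0 := left_ne_zero_of_mul hu.ne'
  have hu₂ : u₂ ≠ 0 := right_ne_zero_of_mul hu.ne'
  have hp : ((x, y, z) : ℝ × ℝ × ℝ) =
      ((u₁ * u₂ - u₂ * x - u₁ * y + z) / (u₁ * u₂)) • (0, 0, 0) +
      ((u₂ * x - z) / (u₁ * u₂)) • (u₁, 0, 0) + ((u₁ * y - z) / (u₁ * u₂)) • (0, u₂, 0) +
      (z / (u₁ * u₂)) • (u₁, u₂, u₁ * u₂) := by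
    simp only [Prod.smul_mk, Prod.mk_add_mk, smul_eq_mul, Prod.mk.injEq]
    refine ⟨?_, ?_, ?_⟩ <;> field_simp <;> ring
  rw [hp]
  refine (convex_convexHull ℝ _).add_smul_four_mem
    (subset_convexHull ℝ _ (by simp)) (subset_convexHull ℝ _ (by simp))
    (subset_convexHull ℝ _ (by simp)) (subset_convexHull ℝ _ (by simp))
    (div_nonneg (by linarith) hu.le) (div_nonneg (by linarith) hu.le)
    (div_nonneg (by linarith) hu.le) (div_nonneg h₃ hu.le) ?_
  field_simp
  ring

theorem mccormick_box_convex_hull (u₁ u₂ : ℝ) (hu₁ : 0 < u₁) (hu₂ : 0 < u₂) :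
    convexHull ℝ
        ({((0 : ℝ), (0 : ℝ), (0 : ℝ)), (u₁, (0 : ℝ), (0 : ℝ)),
          ((0 : ℝ), u₂, (0 : ℝ)), (u₁, u₂, u₁ * u₂)} : Set (ℝ × ℝ × ℝ)) =
      {p : ℝ × ℝ × ℝ |
        p.2.2 ≤ u₂ * p.1 ∧ p.2.2 ≤ u₁ * p.2.1 ∧ 0 ≤ p.2.2 ∧
        u₂ * p.1 + u₁ * p.2.1 - u₁ * u₂ ≤ p.2.2} := by
  have hu : 0 < u₁ * u₂ := mul_pos hu₁ hu₂
  exact (convexHull_min (corners_subset_mcCormickPolytope hu.le)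
    (convex_mcCormickPolytope u₁ u₂)).antisymm (mcCormickPolytope_subset_convexHull_corners hu)
end

section
/- Let G = (V,E) be an m-partite graph with partition V = V₁ ∪ … ∪ V_m such that the dependency graph on {V₁,…,V_m} (with an edge between V_i and V_j whenever the induced bipartite subgraph on V_i ∪ V_j is not complete bipartite) is a forest. Then the convex hull of the incidence vectors of cliques of cardinality m (one node per part) equals the polytope {x ∈ ℝ_+^V : ∑_{v∈V_i} x_v = 1 for all i ∈ [m], and ∑_{v∈C} x_v ≤ 1 for all stable sets C ⊆ V}. -/
/-!
We write `x` as a probability distribution on transversal cliques, adding the parts one at a time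
so that each new part `j` is a leaf of the dependency forest restricted to the parts already placed.
If `j` depends on none of them, its node is drawn independently with law `x` on `P j`: every such
node is adjacent to everything placed. Otherwise `j` depends on exactly one placed part `i₀`, and
its node is drawn given the node `u` chosen in `P i₀` with law `w u · / x u`, where `w` is a coupling
of `x` on `P i₀` and `x` on `P j` supported on edges of `G`. That coupling exists by the fractional
Hall theorem: for `A ⊆ P i₀`, the set `A` together with the nodes of `P j` having no neighbour in
`A` is stable, and its stable-set inequality is exactly Hall's condition for `A`.
-/

open Finset

section Coupling

variable {α β : Type*} (R : α → β → Prop)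

structure IsCoupling (S : Finset α) (T : Finset β) (μ : α → ℝ) (ν : β → ℝ)
    (w : α → β → ℝ) : Prop where
  nonneg : ∀ a b, 0 ≤ w a b
  support : ∀ a b, w a b ≠ 0 → a ∈ S ∧ b ∈ T ∧ R a b
  sum_right : ∀ a ∈ S, ∑ b ∈ T, w a b = μ a
  sum_left : ∀ b ∈ T, ∑ a ∈ S, w a b = ν b

variable {R} {S S₁ S₂ : Finset α} {T T₁ T₂ : Finset β} {μ : α → ℝ} {ν : β → ℝ}
  {w w₁ w₂ : α → β → ℝ} {a₀ : α} {b₀ : β} {t : ℝ}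

namespace IsCoupling

lemma zero (hμ : ∀ a ∈ S, μ a = 0) (hν : ∀ b ∈ T, ν b = 0) : IsCoupling R S T μ ν 0 where
  nonneg _ _ := le_rfl
  support _ _ h := absurd rfl h
  sum_right a ha := by simp [hμ a ha]
  sum_left b hb := by simp [hν b hb]

lemma sum_right_of_subset (hw : IsCoupling R S T μ ν w) {T' : Finset β} (hT : T ⊆ T') {a : α}
    (ha : a ∈ S) : ∑ b ∈ T', w a b = μ a := by
  rw [← hw.sum_right a ha]
  exact (sum_subset hT fun b _ hb => not_not.1 fun h => hb (hw.support a b h).2.1).symm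

lemma sum_left_of_subset (hw : IsCoupling R S T μ ν w) {S' : Finset α} (hS : S ⊆ S') {b : β}
    (hb : b ∈ T) : ∑ a ∈ S', w a b = ν b := by
  rw [← hw.sum_left b hb]
  exact (sum_subset hS fun a _ ha => not_not.1 fun h => ha (hw.support a b h).1).symm

lemma sum_right_eq_zero (hw : IsCoupling R S T μ ν w) {a : α} (ha : a ∉ S) (T' : Finset β) :
    ∑ b ∈ T', w a b = 0 :=
  sum_eq_zero fun b _ => not_not.1 fun h => ha (hw.support a b h).1

lemma sum_left_eq_zero (hw : IsCoupling R S T μ ν w) {b : β} (hb : b ∉ T) (S' : Finset α) :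
    ∑ a ∈ S', w a b = 0 :=
  sum_eq_zero fun a _ => not_not.1 fun h => hb (hw.support a b h).2.1

lemma pos_left (hw : IsCoupling R S T μ ν w) {a : α} {b : β} (h : w a b ≠ 0) : 0 < μ a := by
  obtain ⟨ha, hb, -⟩ := hw.support a b h
  rw [← hw.sum_right a ha]
  exact (lt_of_le_of_ne (hw.nonneg a b) (Ne.symm h)).trans_le
    (single_le_sum (fun b _ => hw.nonneg a b) hb)

lemma union [DecidableEq α] [DecidableEq β] (h₁ : IsCoupling R S₁ T₁ μ ν w₁)
    (h₂ : IsCoupling R S₂ T₂ μ ν w₂) (hS : Disjoint S₁ S₂) (hT : Disjoint T₁ T₂) :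
    IsCoupling R (S₁ ∪ S₂) (T₁ ∪ T₂) μ ν (w₁ + w₂) where
  nonneg a b := add_nonneg (h₁.nonneg a b) (h₂.nonneg a b)
  support a b h := by
    by_cases h0 : w₁ a b = 0
    · obtain ⟨ha, hb, hr⟩ := h₂.support a b (by simpa [h0] using h)
      exact ⟨mem_union_right _ ha, mem_union_right _ hb, hr⟩
    · obtain ⟨ha, hb, hr⟩ := h₁.support a b h0
      exact ⟨mem_union_left _ ha, mem_union_left _ hb, hr⟩
  sum_right a ha := by
    simp only [Pi.add_apply, sum_add_distrib]
    rcases mem_union.1 ha with ha | ha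
    · rw [h₁.sum_right_of_subset subset_union_left ha,
        h₂.sum_right_eq_zero (disjoint_left.1 hS ha), add_zero]
    · rw [h₁.sum_right_eq_zero (disjoint_right.1 hS ha),
        h₂.sum_right_of_subset subset_union_right ha, zero_add]
  sum_left b hb := by
    simp only [Pi.add_apply, sum_add_distrib]
    rcases mem_union.1 hb with hb | hb
    · rw [h₁.sum_left_of_subset subset_union_left hb,
        h₂.sum_left_eq_zero (disjoint_left.1 hT hb), add_zero]
    · rw [h₁.sum_left_eq_zero (disjoint_right.1 hT hb),
        h₂.sum_left_of_subset subset_union_right hb, zero_add]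

lemma add_single [DecidableEq α] [DecidableEq β]
    (hw : IsCoupling R S T (μ - Pi.single a₀ t) (ν - Pi.single b₀ t) w)
    (ht : 0 ≤ t) (ha₀ : a₀ ∈ S) (hb₀ : b₀ ∈ T) (hR : R a₀ b₀) :
    IsCoupling R S T μ ν (fun a b => w a b + if a = a₀ ∧ b = b₀ then t else 0) where
  nonneg a b := add_nonneg (hw.nonneg a b) (by split_ifs <;> simp [ht])
  support a b h := by
    by_cases h0 : a = a₀ ∧ b = b₀
    · obtain ⟨rfl, rfl⟩ := h0
      exact ⟨ha₀, hb₀, hR⟩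
    · exact hw.support a b (by simpa [h0] using h)
  sum_right a ha := by
    have := hw.sum_right a ha
    by_cases h : a = a₀ <;> simp_all [sum_add_distrib]
  sum_left b hb := by
    have := hw.sum_left b hb
    by_cases h : b = b₀ <;> simp_all [sum_add_distrib]

end IsCoupling

variable (R) [DecidableRel R]

def neighbors (T : Finset β) (A : Finset α) : Finset β := {b ∈ T | ∃ a ∈ A, R a b}

def surplus (T : Finset β) (μ : α → ℝ) (ν : β → ℝ) (A : Finset α) : ℝ :=
  ∑ b ∈ neighbors R T A, ν b - ∑ a ∈ A, μ a

structure HallCondition (S : Finset α) (T : Finset β) (μ : α → ℝ) (ν : β → ℝ) : Prop where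
  nonneg_left : ∀ a ∈ S, 0 ≤ μ a
  nonneg_right : ∀ b ∈ T, 0 ≤ ν b
  sum_eq : ∑ a ∈ S, μ a = ∑ b ∈ T, ν b
  surplus_nonneg : ∀ A ⊆ S, 0 ≤ surplus R T μ ν A

variable {R}

lemma neighbors_mono {A A' : Finset α} (h : A ⊆ A') : neighbors R T A ⊆ neighbors R T A' := by
  intro b hb
  obtain ⟨hbT, a, ha, hr⟩ := mem_filter.1 hb
  exact mem_filter.2 ⟨hbT, a, h ha, hr⟩

namespace HallCondition

lemma restrict (h : HallCondition R S T μ ν) (hS₁ : S₁ ⊆ S) (hT₁ : T₁ ⊆ T)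
    (hN : neighbors R T S₁ ⊆ T₁) (htight : ∑ a ∈ S₁, μ a = ∑ b ∈ T₁, ν b) :
    HallCondition R S₁ T₁ μ ν where
  nonneg_left a ha := h.nonneg_left a (hS₁ ha)
  nonneg_right b hb := h.nonneg_right b (hT₁ hb)
  sum_eq := htight
  surplus_nonneg A hA := by
    have : neighbors R T₁ A = neighbors R T A :=
      subset_antisymm (filter_subset_filter _ hT₁) fun b hb =>
        mem_filter.2 ⟨hN (neighbors_mono hA hb), (mem_filter.1 hb).2⟩
    rw [surplus, this]
    exact h.surplus_nonneg A (hA.trans hS₁)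

lemma sdiff [DecidableEq α] [DecidableEq β] (h : HallCondition R S T μ ν) (hS₁ : S₁ ⊆ S)
    (hT₁ : T₁ ⊆ T) (hN : neighbors R T S₁ ⊆ T₁) (htight : ∑ a ∈ S₁, μ a = ∑ b ∈ T₁, ν b) :
    HallCondition R (S \ S₁) (T \ T₁) μ ν where
  nonneg_left a ha := h.nonneg_left a (mem_sdiff.1 ha).1
  nonneg_right b hb := h.nonneg_right b (mem_sdiff.1 hb).1
  sum_eq := by rw [sum_sdiff_eq_sub hS₁, sum_sdiff_eq_sub hT₁, h.sum_eq, htight]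
  surplus_nonneg B hB := by
    have hU := h.surplus_nonneg (S₁ ∪ B) (union_subset hS₁ (hB.trans sdiff_subset))
    have hsub : neighbors R T (S₁ ∪ B) ⊆ T₁ ∪ neighbors R (T \ T₁) B := by
      intro b hb
      obtain ⟨hbT, a, ha, hr⟩ := mem_filter.1 hb
      by_cases hb₁ : b ∈ T₁
      · exact mem_union_left _ hb₁
      rcases mem_union.1 ha with ha | ha
      · exact absurd (hN (mem_filter.2 ⟨hbT, a, ha, hr⟩)) hb₁
      · exact mem_union_right _ (mem_filter.2 ⟨mem_sdiff.2 ⟨hbT, hb₁⟩, a, ha, hr⟩)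
    have hle := sum_le_sum_of_subset_of_nonneg hsub fun b hb _ =>
      h.nonneg_right b (union_subset hT₁ ((filter_subset _ _).trans sdiff_subset) hb)
    have hdisj : Disjoint T₁ (neighbors R (T \ T₁) B) :=
      disjoint_sdiff.mono_right (filter_subset _ _)
    rw [sum_union hdisj] at hle
    rw [surplus, sum_union (disjoint_of_subset_right hB disjoint_sdiff)] at hU
    rw [surplus]
    linarith

lemma shift [DecidableEq α] [DecidableEq β] (h : HallCondition R S T μ ν) (ha₀ : a₀ ∈ S)
    (hb₀ : b₀ ∈ T) (hR : R a₀ b₀) (htμ : t ≤ μ a₀) (htν : t ≤ ν b₀)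
    (htA : ∀ A ⊆ S, a₀ ∉ A → b₀ ∈ neighbors R T A → t ≤ surplus R T μ ν A) :
    HallCondition R S T (μ - Pi.single a₀ t) (ν - Pi.single b₀ t) where
  nonneg_left a ha := by
    by_cases h' : a = a₀
    · subst h'; simpa using htμ
    · simpa [h'] using h.nonneg_left a ha
  nonneg_right b hb := by
    by_cases h' : b = b₀
    · subst h'; simpa using htν
    · simpa [h'] using h.nonneg_right b hb
  sum_eq := by simp [sum_sub_distrib, sum_pi_single', ha₀, hb₀, h.sum_eq]
  surplus_nonneg A hA := by
    have hA₀ := h.surplus_nonneg A hA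
    simp only [surplus, Pi.sub_apply, sum_sub_distrib, sum_pi_single'] at hA₀ ⊢
    by_cases ha : a₀ ∈ A
    · have hb : b₀ ∈ neighbors R T A := mem_filter.2 ⟨hb₀, a₀, ha, hR⟩
      simp only [ha, hb, if_true]
      linarith
    by_cases hb : b₀ ∈ neighbors R T A
    · have := htA A hA ha hb
      simp only [surplus, ha, hb, if_true, if_false] at this ⊢
      linarith
    · simp only [ha, hb, if_false]
      linarith

lemma exists_shift (h : HallCondition R S T μ ν) (hμ : 0 ≤ μ a₀) (hν : 0 ≤ ν b₀) :
    ∃ t, 0 ≤ t ∧ t ≤ μ a₀ ∧ t ≤ ν b₀ ∧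
      (∀ A ⊆ S, a₀ ∉ A → b₀ ∈ neighbors R T A → t ≤ surplus R T μ ν A) ∧
      (t = μ a₀ ∨ t = ν b₀ ∨
        ∃ A ⊆ S, a₀ ∉ A ∧ b₀ ∈ neighbors R T A ∧ t = surplus R T μ ν A) := by
  classical
  set F := {A ∈ S.powerset | a₀ ∉ A ∧ b₀ ∈ neighbors R T A}
  set M := insert (μ a₀) (insert (ν b₀) (F.image (surplus R T μ ν)))
  have hF : ∀ A ⊆ S, a₀ ∉ A → b₀ ∈ neighbors R T A → surplus R T μ ν A ∈ M :=
    fun A hA ha hb => mem_insert_of_mem (mem_insert_of_mem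
      (mem_image_of_mem _ (mem_filter.2 ⟨mem_powerset.2 hA, ha, hb⟩)))
  refine ⟨M.min' (insert_nonempty _ _), ?_, min'_le _ _ (mem_insert_self _ _),
    min'_le _ _ (mem_insert_of_mem (mem_insert_self _ _)),
    fun A hA ha hb => min'_le _ _ (hF A hA ha hb), ?_⟩
  · refine le_min' _ _ _ fun s hs => ?_
    simp only [M, F, mem_insert, mem_image, mem_filter, mem_powerset] at hs
    rcases hs with rfl | rfl | ⟨A, ⟨hA, -⟩, rfl⟩
    exacts [hμ, hν, h.surplus_nonneg A hA]
  · have := min'_mem M (insert_nonempty _ _)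
    simp only [M, F, mem_insert, mem_image, mem_filter, mem_powerset] at this
    rcases this with h' | h' | ⟨A, ⟨hA, ha, hb⟩, h'⟩
    exacts [.inl h', .inr (.inl h'), .inr (.inr ⟨A, hA, ha, hb, h'.symm⟩)]

lemma exists_isCoupling_of_split [DecidableEq α] [DecidableEq β]
    (ih : ∀ (S' : Finset α) (T' : Finset β), #S' + #T' < #S + #T →
      HallCondition R S' T' μ ν → ∃ w, IsCoupling R S' T' μ ν w)
    (h : HallCondition R S T μ ν) (hS₁ : S₁ ⊆ S) (hT₁ : T₁ ⊆ T)
    (hN : neighbors R T S₁ ⊆ T₁) (htight : ∑ a ∈ S₁, μ a = ∑ b ∈ T₁, ν b)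
    (hpos : 0 < #S₁ + #T₁) (hlt : #S₁ + #T₁ < #S + #T) :
    ∃ w, IsCoupling R S T μ ν w := by
  obtain ⟨w₁, hw₁⟩ := ih S₁ T₁ hlt (h.restrict hS₁ hT₁ hN htight)
  obtain ⟨w₂, hw₂⟩ := ih (S \ S₁) (T \ T₁)
    (by rw [card_sdiff_of_subset hS₁, card_sdiff_of_subset hT₁]
        have := card_le_card hS₁; have := card_le_card hT₁; omega)
    (h.sdiff hS₁ hT₁ hN htight)
  have hw := hw₁.union hw₂ disjoint_sdiff disjoint_sdiff
  rw [union_sdiff_of_subset hS₁, union_sdiff_of_subset hT₁] at hw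
  exact ⟨_, hw⟩

theorem exists_isCoupling [DecidableEq α] [DecidableEq β] (h : HallCondition R S T μ ν) :
    ∃ w, IsCoupling R S T μ ν w := by
  -- Route mass `t` along an edge `a₀b₀`, with `t` as large as Hall's condition allows: then `a₀`
  -- or `b₀` is exhausted or some set becomes tight, and either way the instance splits in two.
  induction hn : #S + #T using Nat.strong_induction_on generalizing S T μ ν with
  | _ n ih =>
  subst hn
  by_cases hzero : ∀ a ∈ S, μ a = 0
  · refine ⟨0, .zero hzero ((sum_eq_zero_iff_of_nonneg h.nonneg_right).1 ?_)⟩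
    rw [← h.sum_eq, sum_eq_zero hzero]
  push Not at hzero
  obtain ⟨a₀, ha₀, hμa₀⟩ := hzero
  obtain ⟨b₀, hb₀, hνb₀⟩ : ∃ b ∈ neighbors R T {a₀}, 0 < ν b := by
    have := h.surplus_nonneg {a₀} (singleton_subset_iff.2 ha₀)
    rw [surplus, sum_singleton] at this
    refine exists_lt_of_sum_lt ?_
    rw [sum_const_zero]
    linarith [(h.nonneg_left a₀ ha₀).lt_of_ne' hμa₀]
  obtain ⟨hb₀, hR⟩ : b₀ ∈ T ∧ R a₀ b₀ := by simpa [neighbors] using hb₀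
  obtain ⟨t, ht₀, htμ, htν, htA, hcases⟩ := h.exists_shift (h.nonneg_left a₀ ha₀) hνb₀.le
  have h' := h.shift ha₀ hb₀ hR htμ htν htA
  suffices ∃ w, IsCoupling R S T (μ - Pi.single a₀ t) (ν - Pi.single b₀ t) w by
    obtain ⟨w, hw⟩ := this
    exact ⟨_, hw.add_single ht₀ ha₀ hb₀ hR⟩
  have split := fun (S₁ : Finset α) (T₁ : Finset β) =>
    h'.exists_isCoupling_of_split (S₁ := S₁) (T₁ := T₁) fun S' T' hlt hS' => ih _ hlt hS' rfl
  have hS : 0 < #S := card_pos.2 ⟨a₀, ha₀⟩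
  have hT : 0 < #T := card_pos.2 ⟨b₀, hb₀⟩
  rcases hcases with rfl | rfl | ⟨A, hAS, ha₀A, hb₀A, rfl⟩
  · refine split (S.erase a₀) T (erase_subset a₀ S) subset_rfl (filter_subset _ _) ?_
      (by omega) (by rw [card_erase_of_mem ha₀]; omega)
    rw [sum_erase _ (by simp), h'.sum_eq]
  · refine split ∅ {b₀} (empty_subset _) (singleton_subset_iff.2 hb₀) (by simp [neighbors])
      (by simp) (by simp) (by rw [card_empty, card_singleton]; omega)
  · refine split A (neighbors R T A) hAS (filter_subset _ _) subset_rfl ?_ ?_ ?_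
    · simp [sum_sub_distrib, sum_pi_single', ha₀A, hb₀A, surplus]
    · obtain ⟨a, ha, -⟩ := (mem_filter.1 hb₀A).2
      have := card_pos.2 ⟨a, ha⟩
      omega
    · have := card_lt_card (ssubset_of_subset_of_ne hAS (by rintro rfl; exact ha₀A ha₀))
      have := card_le_card (filter_subset (fun b => ∃ a ∈ A, R a b) T)
      simp only [neighbors]
      omega

end HallCondition

end Coupling

namespace SimpleGraph

variable {ι : Type*} {H : SimpleGraph ι}

lemma IsAcyclic.exists_forall_adj_eq [Finite ι] [Nonempty ι] (hH : H.IsAcyclic) :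
    ∃ j i₀ : ι, ∀ i, H.Adj j i → i = i₀ := by
  -- The start of a longest path has no neighbour other than its successor.
  obtain ⟨j, k, p, hp, hmax⟩ := Walk.exists_isPath_forall_isPath_length_le_length H
  refine ⟨j, p.snd, fun i hi => hH.eq_snd_of_adj_start hp hi ?_⟩
  by_contra hi'
  have := hmax i k (.cons hi.symm p) ((Walk.cons_isPath_iff _ _).2 ⟨hp, hi'⟩)
  simp at this

lemma IsAcyclic.exists_mem_forall_adj_eq (hH : H.IsAcyclic) {T : Finset ι} (hT : T.Nonempty) :
    ∃ j ∈ T, ∃ i₀, ∀ i ∈ T, H.Adj j i → i = i₀ := by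
  have : Nonempty T := hT.to_subtype
  obtain ⟨j, i₀, h⟩ := (hH.induce (T : Set ι)).exists_forall_adj_eq
  exact ⟨j, j.2, i₀, fun i hi hji => congrArg Subtype.val (h ⟨i, hi⟩ hji)⟩

end SimpleGraph

section Gluing

variable {ι V : Type*} (G : SimpleGraph V) (P : ι → Finset V)

structure IsCliqueTransversal (T : Finset ι) (f : ι → V) : Prop where
  mem : ∀ i ∈ T, f i ∈ P i
  adj : (T : Set ι).Pairwise fun i k => G.Adj (f i) (f k)

variable {G P} {T : Finset ι} {f : ι → V} {i₀ j : ι} {v : V}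

lemma IsCliqueTransversal.update [DecidableEq ι] (hf : IsCliqueTransversal G P T f)
    (hj : j ∉ T) (hv : v ∈ P j) (hadj : ∀ i ∈ T, G.Adj (f i) v) :
    IsCliqueTransversal G P (insert j T) (Function.update f j v) where
  mem i hi := by
    rcases mem_insert.1 hi with rfl | hi
    · simpa
    · rw [Function.update_of_ne (ne_of_mem_of_not_mem hi hj)]
      exact hf.mem i hi
  adj := by
    rw [coe_insert, Set.pairwise_insert]
    refine ⟨fun i hi k hk hik => ?_, fun i hi hji => ?_⟩
    · dsimp only
      rw [Function.update_of_ne (ne_of_mem_of_not_mem hi hj),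
        Function.update_of_ne (ne_of_mem_of_not_mem hk hj)]
      exact hf.adj hi hk hik
    · rw [Function.update_self, Function.update_of_ne hji.symm]
      exact ⟨(hadj i hi).symm, hadj i hi⟩

variable [Fintype ι] [DecidableEq ι] [Fintype V] [DecidableEq V]

variable (G P) in
structure IsCliqueCoupling (x : V → ℝ) (T : Finset ι) (D : (ι → V) → ℝ) : Prop where
  nonneg : ∀ f, 0 ≤ D f
  sum_eq_one : ∑ f, D f = 1
  isCliqueTransversal : ∀ f, D f ≠ 0 → IsCliqueTransversal G P T f
  marginal : ∀ i ∈ T, ∀ u ∈ P i, ∑ f with f i = u, D f = x u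

-- The law of `Function.update f j v` when `f` is drawn from `D` and then `v` from `c f`.
def glue (D : (ι → V) → ℝ) (j : ι) (c : (ι → V) → V → ℝ) (g : ι → V) : ℝ :=
  ∑ f, ∑ v, if Function.update f j v = g then D f * c f v else 0

variable {x : V → ℝ} {D : (ι → V) → ℝ} {c : (ι → V) → V → ℝ}

lemma sum_glue_mul (φ : (ι → V) → ℝ) :
    ∑ g, glue D j c g * φ g = ∑ f, D f * ∑ v, c f v * φ (Function.update f j v) := by
  simp only [glue, sum_mul, ite_mul, zero_mul]
  rw [sum_comm]
  refine sum_congr rfl fun f _ => ?_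
  rw [sum_comm, mul_sum]
  refine sum_congr rfl fun v _ => ?_
  rw [sum_ite_eq, if_pos (mem_univ _), mul_assoc]

lemma exists_of_glue_ne_zero {g : ι → V} (h : glue D j c g ≠ 0) :
    ∃ f v, D f ≠ 0 ∧ c f v ≠ 0 ∧ Function.update f j v = g := by
  obtain ⟨f, -, hf⟩ := exists_ne_zero_of_sum_ne_zero h
  obtain ⟨v, -, hv⟩ := exists_ne_zero_of_sum_ne_zero hf
  by_cases hg : Function.update f j v = g
  · rw [if_pos hg] at hv
    exact ⟨f, v, left_ne_zero_of_mul hv, right_ne_zero_of_mul hv, hg⟩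
  · exact absurd (if_neg hg) hv

namespace IsCliqueCoupling

lemma insert_glue (hD : IsCliqueCoupling G P x T D) (hj : j ∉ T)
    (hc : ∀ f, D f ≠ 0 → (∀ v, 0 ≤ c f v) ∧ ∑ v, c f v = 1)
    (hcx : ∀ v ∈ P j, ∑ f, D f * c f v = x v)
    (hsupp : ∀ f v, D f ≠ 0 → c f v ≠ 0 → v ∈ P j ∧ ∀ i ∈ T, G.Adj (f i) v) :
    IsCliqueCoupling G P x (insert j T) (glue D j c) where
  nonneg g := sum_nonneg fun f _ => sum_nonneg fun v _ => by
    split_ifs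
    · by_cases hf : D f = 0
      · simp [hf]
      · exact mul_nonneg (hD.nonneg f) ((hc f hf).1 v)
    · exact le_rfl
  sum_eq_one := by
    have := sum_glue_mul (D := D) (j := j) (c := c) fun _ => 1
    simp only [mul_one] at this
    rw [this, ← hD.sum_eq_one]
    refine sum_congr rfl fun f _ => ?_
    by_cases hf : D f = 0
    · simp [hf]
    · rw [(hc f hf).2, mul_one]
  isCliqueTransversal g hg := by
    obtain ⟨f, v, hf, hv, rfl⟩ := exists_of_glue_ne_zero hg
    obtain ⟨hvP, hadj⟩ := hsupp f v hf hv
    exact (hD.isCliqueTransversal f hf).update hj hvP hadj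
  marginal i hi u hu := by
    have := sum_glue_mul (D := D) (j := j) (c := c) fun g => if g i = u then 1 else 0
    simp only [mul_ite, mul_one, mul_zero] at this
    rw [sum_filter, this]
    rcases mem_insert.1 hi with rfl | hi
    · simp only [Function.update_self, sum_ite_eq', mem_univ, if_true]
      exact hcx u hu
    · rw [← hD.marginal i hi u hu, sum_filter]
      refine sum_congr rfl fun f _ => ?_
      simp only [Function.update_of_ne (ne_of_mem_of_not_mem hi hj)]
      by_cases hf : D f = 0
      · simp [hf]
      · split_ifs <;> simp [(hc f hf).2]

lemma pos_of_ne_zero (hD : IsCliqueCoupling G P x T D) (hf : D f ≠ 0) {i : ι} (hi : i ∈ T) :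
    0 < x (f i) := by
  rw [← hD.marginal i hi (f i) ((hD.isCliqueTransversal f hf).mem i hi)]
  exact (lt_of_le_of_ne (hD.nonneg f) (Ne.symm hf)).trans_le
    (single_le_sum (fun g _ => hD.nonneg g) (mem_filter.2 ⟨mem_univ f, rfl⟩))

lemma insert_of_forall_adj (hD : IsCliqueCoupling G P x T D) (hj : j ∉ T)
    (hx₀ : ∀ v ∈ P j, 0 ≤ x v) (hx₁ : ∑ v ∈ P j, x v = 1)
    (hadj : ∀ i ∈ T, ∀ u ∈ P i, ∀ v ∈ P j, G.Adj u v) :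
    ∃ D', IsCliqueCoupling G P x (insert j T) D' := by
  refine ⟨_, hD.insert_glue (c := fun _ v => if v ∈ P j then x v else 0) hj (fun f _ => ⟨fun v => ?_, ?_⟩)
    (fun v hv => ?_) (fun f v hf hv => ?_)⟩
  · split_ifs with hv
    exacts [hx₀ v hv, le_rfl]
  · rw [sum_ite_mem, univ_inter, hx₁]
  · simp [hv, ← sum_mul, hD.sum_eq_one]
  · have hvP : v ∈ P j := not_not.1 fun h => hv (if_neg h)
    exact ⟨hvP, fun i hi => hadj i hi _ ((hD.isCliqueTransversal f hf).mem i hi) v hvP⟩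

lemma insert_of_isCoupling (hD : IsCliqueCoupling G P x T D) (hj : j ∉ T) (hi₀ : i₀ ∈ T)
    {w : V → V → ℝ} (hw : IsCoupling G.Adj (P i₀) (P j) x x w)
    (hadj : ∀ i ∈ T, i ≠ i₀ → ∀ u ∈ P i, ∀ v ∈ P j, G.Adj u v) :
    ∃ D', IsCliqueCoupling G P x (insert j T) D' := by
  refine ⟨_, hD.insert_glue (c := fun f v => w (f i₀) v / x (f i₀)) hj (fun f hf => ?_)
    (fun v hv => ?_) (fun f v hf hv => ?_)⟩
  · have hx := hD.pos_of_ne_zero hf hi₀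
    refine ⟨fun v => div_nonneg (hw.nonneg _ _) hx.le, ?_⟩
    rw [← sum_div, hw.sum_right_of_subset (subset_univ _)
      ((hD.isCliqueTransversal f hf).mem i₀ hi₀), div_self hx.ne']
  · rw [← sum_fiberwise univ (· i₀), ← hw.sum_left_of_subset (subset_univ _) hv]
    refine sum_congr rfl fun u _ => ?_
    rw [sum_congr rfl fun f hf => by rw [(mem_filter.1 hf).2], ← sum_mul]
    by_cases hwu : w u v = 0
    · simp [hwu]
    rw [hD.marginal i₀ hi₀ u (hw.support u v hwu).1, mul_div_cancel₀ _ (hw.pos_left hwu).ne']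
  · have hwv : w (f i₀) v ≠ 0 := left_ne_zero_of_mul hv
    obtain ⟨-, hvP, hR⟩ := hw.support _ _ hwv
    refine ⟨hvP, fun i hi => ?_⟩
    by_cases hii₀ : i = i₀
    · exact hii₀ ▸ hR
    · exact hadj i hi hii₀ _ ((hD.isCliqueTransversal f hf).mem i hi) v hvP

end IsCliqueCoupling

lemma isCliqueCoupling_empty (f₀ : ι → V) :
    IsCliqueCoupling G P x ∅ fun f => if f = f₀ then 1 else 0 where
  nonneg f := by split_ifs <;> norm_num
  sum_eq_one := by simp
  isCliqueTransversal f _ := ⟨by simp, by simp⟩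
  marginal i hi := absurd hi (notMem_empty i)

theorem exists_isCliqueCoupling (H : SimpleGraph ι) (hH : H.IsAcyclic)
    (hcomplete : ∀ i k, i ≠ k → ¬ H.Adj i k → ∀ u ∈ P i, ∀ v ∈ P k, G.Adj u v)
    (hcoupling : ∀ i k, H.Adj i k → ∃ w, IsCoupling G.Adj (P i) (P k) x x w)
    (hx₀ : ∀ v, 0 ≤ x v) (hx₁ : ∀ i, ∑ v ∈ P i, x v = 1) (T : Finset ι) :
    ∃ D, IsCliqueCoupling G P x T D := by
  induction T using Finset.strongInduction with
  | H T ih =>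
  obtain rfl | hT := T.eq_empty_or_nonempty
  · have hP i : (P i).Nonempty := nonempty_of_sum_ne_zero (by rw [hx₁ i]; exact one_ne_zero)
    exact ⟨_, isCliqueCoupling_empty fun i => (hP i).choose⟩
  obtain ⟨j, hjT, i₀, hleaf⟩ := hH.exists_mem_forall_adj_eq hT
  obtain ⟨D, hD⟩ := ih _ (erase_ssubset hjT)
  rw [← insert_erase hjT]
  by_cases hi₀ : i₀ ∈ T.erase j ∧ H.Adj i₀ j
  · obtain ⟨w, hw⟩ := hcoupling i₀ j hi₀.2
    exact hD.insert_of_isCoupling (notMem_erase j T) hi₀.1 hw fun i hi hne =>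
      hcomplete i j (ne_of_mem_erase hi) fun h => hne (hleaf i (mem_of_mem_erase hi) h.symm)
  · refine hD.insert_of_forall_adj (notMem_erase j T) (fun v _ => hx₀ v) (hx₁ j)
      fun i hi => hcomplete i j (ne_of_mem_erase hi) fun h => hi₀ ?_
    obtain rfl := hleaf i (mem_of_mem_erase hi) h.symm
    exact ⟨hi, h⟩

end Gluing

section Polytope

variable {ι V : Type*} (G : SimpleGraph V) (P : ι → Finset V)

def cliqueVectors : Set (V → ℝ) :=
  {y | (∀ v, y v = 0 ∨ y v = 1) ∧ (∀ i, ∑ v ∈ P i, y v = 1) ∧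
    ∀ u v, u ≠ v → y u = 1 → y v = 1 → G.Adj u v}

def cliqueRelaxation : Set (V → ℝ) :=
  {x | (∀ v, 0 ≤ x v) ∧ (∀ i, ∑ v ∈ P i, x v = 1) ∧
    ∀ C : Finset V, (∀ u ∈ C, ∀ v ∈ C, u ≠ v → ¬ G.Adj u v) → ∑ v ∈ C, x v ≤ 1}

variable {G P}

lemma cliqueVectors_subset_cliqueRelaxation : cliqueVectors G P ⊆ cliqueRelaxation G P := by
  classical
  rintro y ⟨h01, hsum, hadj⟩
  refine ⟨fun v => by rcases h01 v with h | h <;> simp [h], hsum, fun C hC => ?_⟩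
  have : ∑ v ∈ C, y v = #{v ∈ C | y v = 1} := by
    rw [card_filter]
    push_cast
    exact sum_congr rfl fun v _ => by rcases h01 v with h | h <;> simp [h]
  rw [this, Nat.cast_le_one, card_le_one]
  intro u hu v hv
  by_contra huv
  rw [mem_filter] at hu hv
  exact hC u hu.1 v hv.1 huv (hadj u v huv hu.2 hv.2)

lemma convex_cliqueRelaxation : Convex ℝ (cliqueRelaxation G P) := by
  intro x hx y hy a b ha hb hab
  refine ⟨fun v => add_nonneg (mul_nonneg ha (hx.1 v)) (mul_nonneg hb (hy.1 v)),
    fun i => ?_, fun C hC => ?_⟩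
  · simp [sum_add_distrib, ← mul_sum, hx.2.1 i, hy.2.1 i, hab]
  · simp only [Pi.add_apply, Pi.smul_apply, smul_eq_mul, sum_add_distrib, ← mul_sum]
    nlinarith [hx.2.2 C hC, hy.2.2 C hC]

lemma hallCondition_of_mem_cliqueRelaxation [DecidableEq V] [DecidableRel G.Adj] {x : V → ℝ}
    (hindep : ∀ i, ∀ u ∈ P i, ∀ v ∈ P i, ¬ G.Adj u v) (hx : x ∈ cliqueRelaxation G P)
    {i k : ι} (hik : Disjoint (P i) (P k)) : HallCondition G.Adj (P i) (P k) x x where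
  nonneg_left v _ := hx.1 v
  nonneg_right v _ := hx.1 v
  sum_eq := by rw [hx.2.1 i, hx.2.1 k]
  surplus_nonneg A hA := by
    set B := {v ∈ P k | ¬ ∃ a ∈ A, G.Adj a v}
    have hB : B ⊆ P k := filter_subset _ _
    have hstable : ∀ u ∈ A ∪ B, ∀ v ∈ A ∪ B, u ≠ v → ¬ G.Adj u v := by
      intro u hu v hv huv
      rcases mem_union.1 hu with hu | hu <;> rcases mem_union.1 hv with hv | hv
      · exact hindep i u (hA hu) v (hA hv)
      · exact fun h => (mem_filter.1 hv).2 ⟨u, hu, h⟩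
      · exact fun h => (mem_filter.1 hu).2 ⟨v, hv, h.symm⟩
      · exact hindep k u (hB hu) v (hB hv)
    have h₁ := hx.2.2 _ hstable
    rw [sum_union (disjoint_of_subset_left hA (disjoint_of_subset_right hB hik))] at h₁
    have h₂ := sum_filter_add_sum_filter_not (P k) (fun v => ∃ a ∈ A, G.Adj a v) x
    rw [hx.2.1 k] at h₂
    rw [surplus, neighbors]
    linarith

lemma IsCliqueTransversal.indicator_mem_cliqueVectors [Fintype ι] {f : ι → V}
    (hpart : ∀ v, ∃! i, v ∈ P i) (hf : IsCliqueTransversal G P univ f) :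
    (Set.range f).indicator 1 ∈ cliqueVectors G P := by
  classical
  have hidx {i k : ι} (h : f k ∈ P i) : k = i := (hpart (f k)).unique (hf.mem k (mem_univ k)) h
  refine ⟨fun v => ?_, fun i => ?_, ?_⟩
  · by_cases hv : v ∈ Set.range f <;> simp [hv]
  · rw [sum_eq_single_of_mem (f i) (hf.mem i (mem_univ i))]
    · simp
    · rintro v hv hvi
      simp only [Set.indicator_apply_eq_zero, Set.mem_range, Pi.one_apply, one_ne_zero]
      rintro ⟨k, rfl⟩
      exact hvi (by rw [hidx hv])
  · rintro u v huv hu hv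
    obtain ⟨a, rfl⟩ : u ∈ Set.range f := by by_contra h; simp [h] at hu
    obtain ⟨b, rfl⟩ : v ∈ Set.range f := by by_contra h; simp [h] at hv
    exact hf.adj (mem_univ a) (mem_univ b) fun h => huv (h ▸ rfl)

lemma IsCliqueCoupling.mem_convexHull [Fintype ι] [DecidableEq ι] [Fintype V] [DecidableEq V]
    {x : V → ℝ} {D : (ι → V) → ℝ} (hpart : ∀ v, ∃! i, v ∈ P i)
    (hD : IsCliqueCoupling G P x univ D) : x ∈ convexHull ℝ (cliqueVectors G P) := by
  have hx : x = ∑ f with D f ≠ 0, D f • (Set.range f).indicator 1 := by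
    ext v
    obtain ⟨i, hi, -⟩ := hpart v
    rw [← hD.marginal i (mem_univ i) v hi, Finset.sum_apply,
      sum_filter_of_ne fun f _ h => left_ne_zero_of_mul h, sum_filter]
    refine sum_congr rfl fun f _ => ?_
    by_cases hf : D f = 0
    · simp [hf]
    have hfi : v ∈ Set.range f ↔ f i = v := by
      refine ⟨fun ⟨k, hk⟩ => ?_, fun h => ⟨i, h⟩⟩
      have hk' : v ∈ P k := hk ▸ (hD.isCliqueTransversal f hf).mem k (mem_univ k)
      rw [← hk, (hpart v).unique hk' hi]
    simp [Set.indicator_apply, hfi]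
  rw [hx]
  exact (convex_convexHull ℝ _).sum_mem (fun f _ => hD.nonneg f)
    (by rw [sum_filter_ne_zero, hD.sum_eq_one]) fun f hf => subset_convexHull ℝ _
      ((hD.isCliqueTransversal f (mem_filter.1 hf).2).indicator_mem_cliqueVectors hpart)

end Polytope

theorem cpmc_forest_convex_hull_general
    (V : Type) [Fintype V] (G : SimpleGraph V)
    (m : ℕ) (P : Fin m → Finset V)
    -- the parts form a partition of V
    (hpart : ∀ v : V, ∃! i : Fin m, v ∈ P i)
    -- the graph is m-partite: no edges inside a part
    (hindep : ∀ i : Fin m, ∀ u ∈ P i, ∀ v ∈ P i, ¬ G.Adj u v)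
    -- the dependency graph is a forest
    (hforest : (SimpleGraph.fromRel
        (fun i j : Fin m => ∃ u ∈ P i, ∃ v ∈ P j, ¬ G.Adj u v)).IsAcyclic) :
    convexHull ℝ {x : V → ℝ |
        (∀ v, x v = 0 ∨ x v = 1) ∧
        (∀ i : Fin m, (∑ v ∈ P i, x v) = 1) ∧
        (∀ u v : V, u ≠ v → x u = 1 → x v = 1 → G.Adj u v)} =
      {x : V → ℝ |
        (∀ v, 0 ≤ x v) ∧
        (∀ i : Fin m, (∑ v ∈ P i, x v) = 1) ∧
        (∀ C : Finset V, (∀ u ∈ C, ∀ v ∈ C, u ≠ v → ¬ G.Adj u v) →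
          (∑ v ∈ C, x v) ≤ 1)} := by
  classical
  show convexHull ℝ (cliqueVectors G P) = cliqueRelaxation G P
  refine subset_antisymm (convexHull_min cliqueVectors_subset_cliqueRelaxation
    convex_cliqueRelaxation) fun x hx => ?_
  have hdisj {i k : Fin m} (hik : i ≠ k) : Disjoint (P i) (P k) :=
    disjoint_left.2 fun v hi hk => hik ((hpart v).unique hi hk)
  obtain ⟨D, hD⟩ := exists_isCliqueCoupling _ hforest
    (fun i k hik hnadj u hu v hv => not_not.1 fun h =>
      hnadj ((SimpleGraph.fromRel_adj _ _ _).2 ⟨hik, .inl ⟨u, hu, v, hv, h⟩⟩))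
    (fun i k hadj =>
      (hallCondition_of_mem_cliqueRelaxation hindep hx (hdisj hadj.ne)).exists_isCoupling)
    hx.1 hx.2.1 univ
  exact hD.mem_convexHull hpart

theorem cpmc_forest_convex_hull
    (V : Type) [Fintype V] [DecidableEq V] (G : SimpleGraph V)
    (m : ℕ) (P : Fin m → Finset V)
    -- the parts form a partition of V
    (hpart : ∀ v : V, ∃! i : Fin m, v ∈ P i)
    -- the graph is m-partite: no edges inside a part
    (hindep : ∀ i : Fin m, ∀ u ∈ P i, ∀ v ∈ P i, ¬ G.Adj u v)
    -- the dependency graph is a forest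
    (hforest : (SimpleGraph.fromRel
        (fun i j : Fin m => ∃ u ∈ P i, ∃ v ∈ P j, ¬ G.Adj u v)).IsAcyclic) :
    convexHull ℝ {x : V → ℝ |
        (∀ v, x v = 0 ∨ x v = 1) ∧
        (∀ i : Fin m, (∑ v ∈ P i, x v) = 1) ∧
        (∀ u v : V, u ≠ v → x u = 1 → x v = 1 → G.Adj u v)} =
      {x : V → ℝ |
        (∀ v, 0 ≤ x v) ∧
        (∀ i : Fin m, (∑ v ∈ P i, x v) = 1) ∧
        (∀ C : Finset V, (∀ u ∈ C, ∀ v ∈ C, u ≠ v → ¬ G.Adj u v) →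
          (∑ v ∈ C, x v) ≤ 1)} :=
  cpmc_forest_convex_hull_general V G m P hpart hindep hforest
end
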